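/- arXiv:2302.08860 — 7 statements merged into one kernel-verified Lean document; each statement's English description precedes it below -/
import Mathlib

section
/- Let (G, λ, Δ) be a Δ-periodic temporal graph and let P = (v_1, …, v_k) be the underlying path of a fastest temporal path from v_1 to v_k such that for every i, the prefix (v_1, …, v_i) is a fastest temporal path from v_1 to v_i. Letting D_{1,i} denote the duration of a fastest temporal path from v_1 to v_i, the travel delay at each internal vertex satisfies τ_{v_i}^{v_{i−1} v_{i+1}} = D_{1,i+1} − D_{1,i} for all 2 ≤ i ≤ k−1. -/
open SimpleGraph

/-- The residue of `a - b` modulo `Δ`, taken in `{1, …, Δ}` (value `Δ` when `a ≡ b`). -/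
def resDelta (Δ : ℕ) (a b : ℤ) : ℤ :=
  if (a - b) % (Δ : ℤ) = 0 then (Δ : ℤ) else (a - b) % (Δ : ℤ)

/-- In the Δ-periodic temporal graph `(G, lab, Δ)`, edge `e` is active at time `t`. -/
def Active {V : Type*} (G : SimpleGraph V) (Δ : ℕ) (lab : Sym2 V → ℤ)
    (e : Sym2 V) (t : ℤ) : Prop :=
  e ∈ G.edgeSet ∧ 1 ≤ t ∧ t ≡ lab e [ZMOD (Δ : ℤ)]

/-- The labeling assigns every edge a label in `{1, …, Δ}`. -/
def ValidLab {V : Type*} (G : SimpleGraph V) (Δ : ℕ) (lab : Sym2 V → ℤ) : Prop :=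
  ∀ e ∈ G.edgeSet, lab e ∈ Finset.Icc (1 : ℤ) (Δ : ℤ)

/-- `times` is a valid schedule of strictly increasing activation times for the walk `W`. -/
def IsTemporalWalk {V : Type*} (G : SimpleGraph V) (Δ : ℕ) (lab : Sym2 V → ℤ)
    {u v : V} (W : G.Walk u v) (times : List ℤ) : Prop :=
  List.Forall₂ (fun e t => Active G Δ lab e t) W.edges times ∧ times.Chain' (· < ·)

/-- Duration of a temporal path with the given traversal times. -/
def duration (times : List ℤ) : ℤ := times.getLast! - times.head! + 1

/-- There is a temporal path from `u` to `v` of duration `d`. -/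
def HasDur {V : Type*} (G : SimpleGraph V) (Δ : ℕ) (lab : Sym2 V → ℤ)
    (u v : V) (d : ℤ) : Prop :=
  ∃ (W : G.Walk u v) (times : List ℤ), W.IsPath ∧ times ≠ [] ∧
    IsTemporalWalk G Δ lab W times ∧ duration times = d

/-- `d` is the duration of a fastest temporal path from `u` to `v`. -/
def IsFastest {V : Type*} (G : SimpleGraph V) (Δ : ℕ) (lab : Sym2 V → ℤ)
    (u v : V) (d : ℤ) : Prop :=
  HasDur G Δ lab u v d ∧ ∀ d', HasDur G Δ lab u v d' → d ≤ d'

/-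
The traversal times `t (i-1) < t i` of the edges around `v_i` differ by a positive number
congruent to `τ` modulo `Δ`, so it suffices that the gap is at most `Δ`. If it were larger,
leaving `v_i` one period earlier, at `t i - Δ`, would still be after `t (i-1)` and would give a
temporal path to `v_{i+1}` of duration `D (i+1) - Δ`, contradicting the fastestness of the prefix.
-/

namespace SimpleGraph

variable {V : Type*} (G : SimpleGraph V) (vtx : ℕ → V)

def walkOfSeq : ∀ n, (∀ j < n, G.Adj (vtx j) (vtx (j + 1))) → G.Walk (vtx 0) (vtx n)
  | 0, _ => .nil
  | n + 1, h => (walkOfSeq n fun j hj => h j (by omega)).concat (h n (by omega))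

lemma edges_walkOfSeq (n : ℕ) (h : ∀ j < n, G.Adj (vtx j) (vtx (j + 1))) :
    (G.walkOfSeq vtx n h).edges = (List.range n).map fun j => s(vtx j, vtx (j + 1)) := by
  induction n with
  | zero => rfl
  | succ n ih => simp [walkOfSeq, ih, List.range_succ]

lemma support_walkOfSeq (n : ℕ) (h : ∀ j < n, G.Adj (vtx j) (vtx (j + 1))) :
    (G.walkOfSeq vtx n h).support = (List.range (n + 1)).map vtx := by
  induction n with
  | zero => rfl
  | succ n ih => simp [walkOfSeq, ih, List.range_succ (n := n + 1)]

lemma isPath_walkOfSeq {n : ℕ} (h : ∀ j < n, G.Adj (vtx j) (vtx (j + 1)))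
    (hinj : Set.InjOn vtx (Set.Iic n)) : (G.walkOfSeq vtx n h).IsPath := by
  rw [Walk.isPath_def, support_walkOfSeq]
  refine List.nodup_range.map_on fun a ha b hb hab => hinj ?_ ?_ hab <;>
    simp_all

end SimpleGraph

section TemporalGraph

variable {V : Type*} {G : SimpleGraph V} {Δ : ℕ} {lab : Sym2 V → ℤ}

lemma Active.sub_period {e : Sym2 V} {t : ℤ} (h : Active G Δ lab e t) (ht : 1 ≤ t - Δ) :
    Active G Δ lab e (t - Δ) :=
  ⟨h.1, ht, Int.sub_modulus_modEq_iff.mpr h.2.2⟩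

lemma hasDur_of_schedule (vtx : ℕ → V) (s : ℕ → ℤ) (n : ℕ)
    (hact : ∀ j ≤ n, Active G Δ lab s(vtx j, vtx (j + 1)) (s j))
    (hmono : StrictMonoOn s (Set.Iic n)) (hinj : Set.InjOn vtx (Set.Iic (n + 1))) :
    HasDur G Δ lab (vtx 0) (vtx (n + 1)) (s n - s 0 + 1) := by
  have hadj : ∀ j < n + 1, G.Adj (vtx j) (vtx (j + 1)) := fun j hj =>
    (hact j (by omega)).1
  refine ⟨G.walkOfSeq vtx (n + 1) hadj, (List.range (n + 1)).map s,
    G.isPath_walkOfSeq vtx hadj hinj, by simp, ⟨?_, ?_⟩, ?_⟩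
  · rw [SimpleGraph.edges_walkOfSeq, List.forall₂_map_left_iff, List.forall₂_map_right_iff,
      List.forall₂_same]
    exact fun j hj => hact j (by simpa [Nat.lt_succ_iff] using hj)
  · refine List.Pairwise.isChain ?_
    rw [List.pairwise_map]
    refine List.pairwise_lt_range.imp_of_mem fun ha hb hab => hmono ?_ ?_ hab <;>
      simp_all
  · have hlast : ((List.range (n + 1)).map s).getLast! = s n := by simp [List.range_succ]
    have hhead : ((List.range (n + 1)).map s).head! = s 0 := by simp [List.range_succ_eq_map]
    rw [duration, hlast, hhead]

lemma sub_le_period_of_fastest (hΔ : 1 ≤ Δ) (vtx : ℕ → V) (s : ℕ → ℤ) (n : ℕ)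
    (hact : ∀ j ≤ n + 1, Active G Δ lab s(vtx j, vtx (j + 1)) (s j))
    (hmono : StrictMonoOn s (Set.Iic (n + 1))) (hinj : Set.InjOn vtx (Set.Iic (n + 2)))
    (hfast : ∀ d, HasDur G Δ lab (vtx 0) (vtx (n + 2)) d → s (n + 1) - s 0 + 1 ≤ d) :
    s (n + 1) - s n ≤ Δ := by
  by_contra! hgap
  set s' := Function.update s (n + 1) (s (n + 1) - Δ)
  have hs' : ∀ j ≤ n, s' j = s j := fun j hj => Function.update_of_ne (by omega) _ _
  have hlast : s' (n + 1) = s (n + 1) - Δ := Function.update_self ..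
  have hsn : 1 ≤ s n := (hact n (by omega)).2.1
  have hact' : ∀ j ≤ n + 1, Active G Δ lab s(vtx j, vtx (j + 1)) (s' j) := by
    intro j hj
    rcases Nat.le_succ_iff.mp hj with hj | rfl
    · exact hs' j hj ▸ hact j (by omega)
    · exact hlast ▸ (hact (n + 1) le_rfl).sub_period (by omega)
  have hmono' : StrictMonoOn s' (Set.Iic (n + 1)) := by
    intro a ha b hb hab
    have hsa : s' a = s a := hs' a (by simp at hb ⊢; omega)
    rcases Nat.le_succ_iff.mp (Set.mem_Iic.mp hb) with hb | rfl
    · rw [hsa, hs' b hb]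
      exact hmono ha (by simp; omega) hab
    · rw [hsa, hlast]
      have : s a ≤ s n := hmono.monotoneOn ha (by simp) (by omega)
      omega
  have := hfast _ (hasDur_of_schedule vtx s' (n + 1) hact' hmono' hinj)
  rw [hlast, hs' 0 (by omega)] at this
  omega

lemma resDelta_eq_of_modEq {Δ : ℕ} {a b g : ℤ} (h1 : 1 ≤ g) (h2 : g ≤ Δ)
    (h : g ≡ a - b [ZMOD Δ]) : resDelta Δ a b = g := by
  rw [resDelta, ← h]
  rcases h2.eq_or_lt with rfl | hlt
  · simp
  · rw [Int.emod_eq_of_lt (by omega) hlt, if_neg (by omega)]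

end TemporalGraph

theorem stmt3_general {V : Type*} (G : SimpleGraph V) (Δ : ℕ) (hΔ : 1 ≤ Δ)
    (lab : Sym2 V → ℤ)
    (k : ℕ) (vtx : ℕ → V) (t : ℕ → ℤ) (D : ℕ → ℤ)
    (hinj : ∀ i j, i ≤ k - 1 → j ≤ k - 1 → vtx i = vtx j → i = j)
    (hactive : ∀ i, i ≤ k - 2 → Active G Δ lab s(vtx i, vtx (i + 1)) (t i))
    (hmono : ∀ i j, i < j → j ≤ k - 2 → t i < t j)
    (hD : ∀ i, 1 ≤ i → i ≤ k - 1 → D i = t (i - 1) - t 0 + 1)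
    (hfast : ∀ i, 1 ≤ i → i ≤ k - 1 → IsFastest G Δ lab (vtx 0) (vtx i) (D i)) :
    ∀ i, 1 ≤ i → i ≤ k - 2 →
      resDelta Δ (lab s(vtx i, vtx (i + 1))) (lab s(vtx (i - 1), vtx i)) = D (i + 1) - D i := by
  intro i hi hik
  obtain ⟨n, rfl⟩ : ∃ n, i = n + 1 := ⟨i - 1, by omega⟩
  have hDnext : D (n + 2) = t (n + 1) - t 0 + 1 := hD (n + 2) (by omega) (by omega)
  have hgap_pos : 1 ≤ t (n + 1) - t n := by linarith [hmono n (n + 1) (by omega) hik]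
  have hgap_le : t (n + 1) - t n ≤ Δ :=
    sub_le_period_of_fastest hΔ vtx t n (fun j hj => hactive j (by omega))
      (fun a _ b hb hab => hmono a b hab (by simp at hb; omega))
      (fun a ha b hb => hinj a b (by simp at ha; omega) (by simp at hb; omega))
      (fun d hd => hDnext ▸ (hfast (n + 2) (by omega) (by omega)).2 d hd)
  rw [hDnext, hD (n + 1) (by omega) (by omega), Nat.add_sub_cancel,
    add_sub_add_right_eq_sub, sub_sub_sub_cancel_right]
  exact resDelta_eq_of_modEq hgap_pos hgap_le
    ((hactive (n + 1) hik).2.2.sub (hactive n (by omega)).2.2)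

/-- If `P = (v_0, …, v_{k-1})` is the underlying path of a fastest temporal path from
`v_0` to `v_{k-1}` (traversed at times `t 0 < t 1 < …`), every prefix of which is a fastest
temporal path from `v_0` to the corresponding vertex (with `D i` the fastest duration from
`v_0` to `v_i`), then the travel delay at every internal vertex `v_i` equals
`D (i+1) - D i`. -/
theorem stmt3 {V : Type*} (G : SimpleGraph V) (Δ : ℕ) (hΔ : 1 ≤ Δ)
    (lab : Sym2 V → ℤ) (hval : ValidLab G Δ lab)
    (k : ℕ) (hk : 2 ≤ k) (vtx : ℕ → V) (t : ℕ → ℤ) (D : ℕ → ℤ)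
    (hinj : ∀ i j, i ≤ k - 1 → j ≤ k - 1 → vtx i = vtx j → i = j)
    (hactive : ∀ i, i ≤ k - 2 → Active G Δ lab s(vtx i, vtx (i + 1)) (t i))
    (hmono : ∀ i j, i < j → j ≤ k - 2 → t i < t j)
    (hD : ∀ i, 1 ≤ i → i ≤ k - 1 → D i = t (i - 1) - t 0 + 1)
    (hfast : ∀ i, 1 ≤ i → i ≤ k - 1 → IsFastest G Δ lab (vtx 0) (vtx i) (D i)) :
    ∀ i, 1 ≤ i → i ≤ k - 2 →
      resDelta Δ (lab s(vtx i, vtx (i + 1))) (lab s(vtx (i - 1), vtx i)) = D (i + 1) - D i :=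
  stmt3_general G Δ hΔ lab k vtx t D hinj hactive hmono hD hfast
end

section
/- Let D be an n × n matrix realized by a Δ-periodic temporal graph whose underlying graph is a tree T. Then for every pair of vertices u, v, the unique static path from u to v in T is the underlying path of the fastest temporal path from u to v, and consequently D_{u,v} equals the duration of the temporal path along this unique path. Moreover, the travel delays at all internal vertices of this path are uniquely determined by D via τ_{v_i}^{v_{i−1} v_{i+1}} = D_{u, v_{i+1}} − D_{u, v_i}. -/
open SimpleGraph

/-!
Along a fixed walk, the earliest-departure schedule is fastest: starting at the first activation
of the first edge and then always taking the next edge at its next activation, the waiting time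
at each internal vertex is exactly the travel delay there, and no schedule can wait less. So the
fastest duration along a walk is `1 + ∑ τ`. In a tree every temporal path from `u` to `v` lies on
the unique static path, hence `D u v` is this sum for that path; comparing the prefixes ending at
`v_i` and `v_{i+1}` isolates the delay at `v_i`.
-/

section Schedules

variable {Δ : ℕ} {a b b' t x : ℤ} {l ts : List ℤ}

lemma one_le_resDelta (hΔ : 1 ≤ Δ) (a b : ℤ) : 1 ≤ resDelta Δ a b := by
  have := Int.emod_nonneg (a - b) (by omega : (Δ : ℤ) ≠ 0)
  unfold resDelta
  split_ifs <;> omega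

lemma resDelta_modEq (Δ : ℕ) (a b : ℤ) : resDelta Δ a b ≡ a - b [ZMOD Δ] := by
  unfold resDelta
  split_ifs with h
  · simp [Int.ModEq, h]
  · exact Int.mod_modEq _ _

lemma resDelta_le_of_modEq (hx : 1 ≤ x) (h : x ≡ a - b [ZMOD Δ]) : resDelta Δ a b ≤ x := by
  unfold resDelta
  rcases Nat.eq_zero_or_pos Δ with rfl | hΔ
  · simp only [Int.ModEq, Int.natCast_zero, Int.emod_zero] at *
    split_ifs <;> omega
  split_ifs with h0
  · exact Int.le_of_dvd (by omega) (Int.dvd_of_emod_eq_zero (h.eq.trans h0))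
  · have := Int.emod_add_mul_ediv x Δ
    have := Int.ediv_nonneg (by omega : 0 ≤ x) (by omega : (0 : ℤ) ≤ Δ)
    rw [← h.eq]
    nlinarith

lemma resDelta_congr_right (a : ℤ) (h : b ≡ b' [ZMOD Δ]) :
    resDelta Δ a b = resDelta Δ a b' := by
  unfold resDelta
  rw [Int.ModEq.sub_left a h]

lemma add_resDelta_modEq (a t : ℤ) : t + resDelta Δ a t ≡ a [ZMOD Δ] := by
  simpa using (resDelta_modEq Δ a t).add_left t

def totalDelay (Δ : ℕ) : ℤ → List ℤ → ℤ
  | _, [] => 0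
  | b, a :: l => resDelta Δ a b + totalDelay Δ a l

def minDuration (Δ : ℕ) : List ℤ → ℤ
  | [] => 0
  | a :: l => 1 + totalDelay Δ a l

def greedySchedule (Δ : ℕ) : ℤ → List ℤ → List ℤ
  | _, [] => []
  | t, a :: l => (t + resDelta Δ a t) :: greedySchedule Δ (t + resDelta Δ a t) l

lemma totalDelay_append_singleton (b : ℤ) (l : List ℤ) (a : ℤ) :
    totalDelay Δ b (l ++ [a]) =
      totalDelay Δ b l + resDelta Δ a ((b :: l).getLast (List.cons_ne_nil b l)) := by
  induction l generalizing b with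
  | nil => simp [totalDelay]
  | cons c l ih => simp only [List.cons_append, totalDelay, ih, List.getLast_cons_cons]; ring

lemma minDuration_append_singleton {l : List ℤ} (hl : l ≠ []) (a : ℤ) :
    minDuration Δ (l ++ [a]) = minDuration Δ l + resDelta Δ a (l.getLast hl) := by
  obtain ⟨c, l, rfl⟩ := List.exists_cons_of_ne_nil hl
  simp only [List.cons_append, minDuration, totalDelay_append_singleton]
  ring

lemma minDuration_take_add_one (l : List ℤ) {i : ℕ} (hi : 1 ≤ i) (hil : i < l.length) :
    minDuration Δ (l.take (i + 1)) = minDuration Δ (l.take i) + resDelta Δ l[i] l[i - 1] := by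
  have hne : l.take i ≠ [] := List.ne_nil_of_length_pos (by rw [List.length_take]; omega)
  rw [← List.take_concat_get' l i hil, minDuration_append_singleton hne, List.getLast_take,
    List.getElem?_eq_getElem (by omega), Option.getD_some]

@[simp]
lemma length_greedySchedule (t : ℤ) (l : List ℤ) :
    (greedySchedule Δ t l).length = l.length := by
  induction l generalizing t <;> simp [greedySchedule, *]

lemma isChain_cons_greedySchedule (hΔ : 1 ≤ Δ) (t : ℤ) (l : List ℤ) :
    (t :: greedySchedule Δ t l).IsChain (· < ·) := by
  induction l generalizing t with
  | nil => exact List.isChain_singleton t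
  | cons a l ih =>
    exact List.IsChain.cons_cons (by linarith [one_le_resDelta hΔ a t]) (ih _)

lemma forall₂_greedySchedule (hΔ : 1 ≤ Δ) (t : ℤ) (l : List ℤ) :
    List.Forall₂ (fun a s => t < s ∧ s ≡ a [ZMOD Δ]) l (greedySchedule Δ t l) := by
  induction l generalizing t with
  | nil => exact .nil
  | cons a l ih =>
    have hlt : t < t + resDelta Δ a t := by linarith [one_le_resDelta hΔ a t]
    exact .cons ⟨hlt, add_resDelta_modEq a t⟩ ((ih _).imp fun _ _ h => ⟨hlt.trans h.1, h.2⟩)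

lemma getLastD_greedySchedule (ht : t ≡ b [ZMOD Δ]) (l : List ℤ) :
    (greedySchedule Δ t l).getLastD t = t + totalDelay Δ b l := by
  induction l generalizing t b with
  | nil => simp [greedySchedule, totalDelay]
  | cons a l ih =>
    rw [greedySchedule, List.getLastD_cons, ih (add_resDelta_modEq a t), totalDelay,
      resDelta_congr_right a ht]
    ring

lemma le_getLastD (hmod : List.Forall₂ (fun a s => s ≡ a [ZMOD Δ]) l ts)
    (hchain : (t :: ts).IsChain (· < ·)) (ht : t ≡ b [ZMOD Δ]) :
    t + totalDelay Δ b l ≤ ts.getLastD t := by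
  induction hmod generalizing t b with
  | nil => simp [totalDelay]
  | @cons a s l ts has _ ih =>
    obtain ⟨hts, hchain⟩ := List.isChain_cons_cons.mp hchain
    have hdelay : resDelta Δ a b ≤ s - t := resDelta_le_of_modEq (by omega) (has.sub ht)
    rw [List.getLastD_cons, totalDelay]
    linarith [ih hchain has]

lemma duration_greedySchedule {l : List ℤ} (hl : l ≠ []) :
    duration (greedySchedule Δ 0 l) = minDuration Δ l := by
  obtain ⟨a, l, rfl⟩ := List.exists_cons_of_ne_nil hl
  rw [greedySchedule, duration, List.getLast!_cons_eq_getLastD,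
    getLastD_greedySchedule (add_resDelta_modEq a 0), minDuration, List.head!_cons]
  ring

lemma minDuration_le_duration (hmod : List.Forall₂ (fun a s => s ≡ a [ZMOD Δ]) l ts)
    (hchain : ts.IsChain (· < ·)) : minDuration Δ l ≤ duration ts := by
  cases hmod with
  | nil => simp [minDuration, duration]
  | cons has hmod =>
    rw [minDuration, duration, List.getLast!_cons_eq_getLastD, List.head!_cons]
    linarith [le_getLastD hmod hchain has]

end Schedules

section TemporalWalks

variable {V : Type*} {G : SimpleGraph V} {Δ : ℕ} {lab : Sym2 V → ℤ} {u v x y : V} {d : ℤ}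

lemma isTemporalWalk_greedySchedule (hΔ : 1 ≤ Δ) (W : G.Walk x y) :
    IsTemporalWalk G Δ lab W (greedySchedule Δ 0 (W.edges.map lab)) := by
  refine ⟨(List.forall₂_and_left _ _).2 ⟨fun e he => W.edges_subset_edgeSet he, ?_⟩,
    (isChain_cons_greedySchedule hΔ 0 _).tail⟩
  exact (List.forall₂_map_left_iff.1 (forall₂_greedySchedule hΔ 0 _)).imp
    fun _ _ h => ⟨h.1, h.2⟩

lemma IsTemporalWalk.minDuration_le {W : G.Walk x y} {times : List ℤ}
    (h : IsTemporalWalk G Δ lab W times) : minDuration Δ (W.edges.map lab) ≤ duration times :=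
  minDuration_le_duration (List.forall₂_map_left_iff.2 (h.1.imp fun _ _ he => he.2.2)) h.2

lemma IsFastest.eq_minDuration (hG : G.IsTree) (hΔ : 1 ≤ Δ) (hd : IsFastest G Δ lab x y d)
    {W : G.Walk x y} (hW : W.IsPath) : d = minDuration Δ (W.edges.map lab) := by
  obtain ⟨⟨W', times, hW', htimes, hT, rfl⟩, hmin⟩ := hd
  obtain rfl : W' = W := (hG.existsUnique_path x y).unique hW' hW
  have hlen : 0 < (W'.edges.map lab).length := by
    rw [List.length_map, hT.1.length_eq]
    exact List.length_pos_iff.2 htimes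
  refine le_antisymm (hmin _ ⟨W', _, hW', ?_, isTemporalWalk_greedySchedule hΔ W',
    duration_greedySchedule (List.length_pos_iff.1 hlen)⟩) hT.minDuration_le
  rw [← List.length_pos_iff, length_greedySchedule]
  exact hlen

lemma eq_minDuration_take (hG : G.IsTree) (hΔ : 1 ≤ Δ) {D : V → V → ℤ}
    (hreal : ∀ u v : V, u ≠ v → IsFastest G Δ lab u v (D u v)) {P : G.Walk u v}
    (hP : P.IsPath) {j : ℕ} (hj : 1 ≤ j) (hjP : j ≤ P.length) :
    D u (P.getVert j) = minDuration Δ ((P.edges.map lab).take j) := by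
  have hu : u ≠ P.getVert j := fun h => by have := (hP.getVert_eq_start_iff hjP).1 h.symm; omega
  rw [(hreal u _ hu).eq_minDuration hG hΔ (hP.take j), Walk.edges_take, List.map_take]

end TemporalWalks

theorem stmt4_general {V : Type*} (G : SimpleGraph V) (hG : G.IsTree) (Δ : ℕ) (hΔ : 1 ≤ Δ)
    (lab : Sym2 V → ℤ) (D : V → V → ℤ)
    (hreal : ∀ u v : V, u ≠ v → IsFastest G Δ lab u v (D u v)) :
    ∀ (u v : V) (P : G.Walk u v), u ≠ v → P.IsPath →
      ((∃ times : List ℤ, IsTemporalWalk G Δ lab P times ∧ duration times = D u v) ∧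
        ∀ i, 1 ≤ i → i + 1 ≤ P.length →
          resDelta Δ (lab s(P.getVert i, P.getVert (i + 1)))
              (lab s(P.getVert (i - 1), P.getVert i)) =
            D u (P.getVert (i + 1)) - D u (P.getVert i)) := by
  intro u v P huv hP
  have hlen : P.length ≠ 0 := fun h => huv (Walk.eq_of_length_eq_zero h)
  refine ⟨⟨_, isTemporalWalk_greedySchedule hΔ P, ?_⟩, fun i hi hiP => ?_⟩
  · rw [duration_greedySchedule (by simpa using hlen), (hreal u v huv).eq_minDuration hG hΔ hP]
  · have hi' : i < (P.edges.map lab).length := by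
      rw [List.length_map, Walk.length_edges]; omega
    rw [eq_minDuration_take hG hΔ hreal hP (by omega) hiP, eq_minDuration_take hG hΔ hreal hP hi
      (by omega), minDuration_take_add_one _ hi hi', List.getElem_map, List.getElem_map,
      Walk.getElem_edges, Walk.getElem_edges, Nat.sub_add_cancel hi]
    ring

/-- If `D` is realized by a Δ-periodic temporal graph whose underlying graph is a tree, then
for every pair `u ≠ v`, the unique static path from `u` to `v` carries a temporal path of
duration exactly `D u v` (so it underlies a fastest temporal path), and the travel delays at
all internal vertices of this path are determined by `D` via
`τ_{v_i}^{v_{i-1} v_{i+1}} = D u v_{i+1} − D u v_i`. -/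
theorem stmt4 {V : Type*} (G : SimpleGraph V) (hG : G.IsTree) (Δ : ℕ) (hΔ : 1 ≤ Δ)
    (lab : Sym2 V → ℤ) (hval : ValidLab G Δ lab) (D : V → V → ℤ)
    (hreal : ∀ u v : V, u ≠ v → IsFastest G Δ lab u v (D u v)) :
    ∀ (u v : V) (P : G.Walk u v), u ≠ v → P.IsPath →
      ((∃ times : List ℤ, IsTemporalWalk G Δ lab P times ∧ duration times = D u v) ∧
        ∀ i, 1 ≤ i → i + 1 ≤ P.length →
          resDelta Δ (lab s(P.getVert i, P.getVert (i + 1)))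
              (lab s(P.getVert (i - 1), P.getVert i)) =
            D u (P.getVert (i + 1)) - D u (P.getVert i)) :=
  stmt4_general G hG Δ hΔ lab D hreal
end

section
/- In a Δ-periodic temporal graph, suppose a path P and a path Q both go from u to v_i, with Q being a prefix of a fastest u-to-v path continuing along R from v_i to v, and P a fastest u-to-v_i path, satisfying: (1) d(u, v_i) = d(u, v_i, P) ≤ d(u, v_i, Q), and (2) d(u, v) = d(u, v, Q ∪ R) ≤ d(u, v, P ∪ R). Let t_{v_2} be the label of the first edge of Q and t_{u_2} the first activation of the first edge of P within [t_{v_2}, t_{v_2} + Δ − 1], and set δ_0 = d(u, v_i, Q) − d(u, v_i) ≥ 0. If t_{u_2} ≠ t_{v_2}, then δ_0 ≤ Δ − 2 and t_{u_2} ≥ t_{v_2} + δ_0 + 1. -/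
/-- The starting time of the wasteless temporal traversal of a path whose edges carry the
labels `L` (period `Δ`), starting within the window `[t, t + Δ − 1]`: the first activation
of the first edge at a time `≥ t`. -/
def startT (Δ : ℕ) (t : ℤ) (L : List ℤ) : ℤ := t + (L.head! - t) % (Δ : ℤ)

/-- The arrival time of the wasteless temporal traversal of a path with edge labels `L`,
starting within the window `[t, t + Δ − 1]`: after the first edge, each edge is traversed
at its first activation strictly after the previous traversal time. -/
def arrT (Δ : ℕ) (t : ℤ) (L : List ℤ) : ℤ :=
  L.tail.foldl (fun s l => s + resDelta Δ l s) (startT Δ t L)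

/-- The duration of the wasteless temporal traversal of a path with edge labels `L`,
starting within the window `[t, t + Δ − 1]`. -/
def durT (Δ : ℕ) (t : ℤ) (L : List ℤ) : ℤ := arrT Δ t L - startT Δ t L + 1

lemma resDelta_spec (Δ : ℕ) (hΔ : 1 ≤ Δ) (l s : ℤ) :
    0 < resDelta Δ l s ∧ resDelta Δ l s ≤ (Δ : ℤ) ∧ (Δ : ℤ) ∣ (s + resDelta Δ l s - l) := by
  have hΔ' : (0 : ℤ) < (Δ : ℤ) := by exact_mod_cast hΔ
  have hd := Int.emod_add_mul_ediv (l - s) (Δ : ℤ)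
  unfold resDelta
  split_ifs with h
  · obtain ⟨k, hk⟩ := Int.dvd_of_emod_eq_zero h
    exact ⟨hΔ', le_refl _, ⟨1 - k, by linarith⟩⟩
  · have h1 : 0 ≤ (l - s) % (Δ : ℤ) := Int.emod_nonneg _ (ne_of_gt hΔ')
    have h2 : (l - s) % (Δ : ℤ) < (Δ : ℤ) := Int.emod_lt_of_pos _ hΔ'
    refine ⟨lt_of_le_of_ne h1 (Ne.symm h), le_of_lt h2, ⟨-((l - s) / Δ), by linarith⟩⟩

lemma next_mono (Δ : ℕ) (hΔ : 1 ≤ Δ) (l : ℤ) {s s' : ℤ} (h : s ≤ s') :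
    s + resDelta Δ l s ≤ s' + resDelta Δ l s' := by
  have hΔ' : (0 : ℤ) < (Δ : ℤ) := by exact_mod_cast hΔ
  obtain ⟨p1, b1, d1⟩ := resDelta_spec Δ hΔ l s
  obtain ⟨p2, b2, d2⟩ := resDelta_spec Δ hΔ l s'
  by_contra hc
  push_neg at hc
  have hdvd : (Δ : ℤ) ∣ (s + resDelta Δ l s - (s' + resDelta Δ l s')) := by
    have := Int.dvd_sub d1 d2
    simpa using this
  have hpos : 0 < s + resDelta Δ l s - (s' + resDelta Δ l s') := by linarith
  have := Int.le_of_dvd hpos hdvd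
  linarith

lemma foldl_mono (Δ : ℕ) (hΔ : 1 ≤ Δ) (L : List ℤ) :
    ∀ {s s' : ℤ}, s ≤ s' →
      L.foldl (fun s l => s + resDelta Δ l s) s ≤ L.foldl (fun s l => s + resDelta Δ l s) s' := by
  induction L with
  | nil => intro s s' h; simpa using h
  | cons a L ih => intro s s' h; exact ih (next_mono Δ hΔ a h)

lemma arrT_append (Δ : ℕ) (t : ℤ) (L M : List ℤ) (hL : L ≠ []) :
    arrT Δ t (L ++ M) = M.foldl (fun s l => s + resDelta Δ l s) (arrT Δ t L) := by
  obtain ⟨a, L', rfl⟩ := List.exists_cons_of_ne_nil hL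
  simp [arrT, startT, List.foldl_append]

lemma startT_append (Δ : ℕ) (t : ℤ) (L M : List ℤ) (hL : L ≠ []) :
    startT Δ t (L ++ M) = startT Δ t L := by
  obtain ⟨a, L', rfl⟩ := List.exists_cons_of_ne_nil hL
  simp [startT]


/-- Let `P` and `Q` be two paths from `u` to `v_i` (with edge-label lists `LP`, `LQ`), and
`R` a continuation from `v_i` to `v` (labels `LR`). Assume (1) `P` is at least as fast as
`Q` from `u` to `v_i`, and (2) `Q ∪ R` is at least as fast as `P ∪ R` from `u` to `v`,
all starting within the window beginning at `t_{v₂} = λ(first edge of Q)`. With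
`t_{u₂}` the first activation of the first edge of `P` within this window and
`δ₀ = d(u,v_i,Q) − d(u,v_i,P) ≥ 0`: if `t_{u₂} ≠ t_{v₂}` then `δ₀ ≤ Δ − 2` and
`t_{u₂} ≥ t_{v₂} + δ₀ + 1`. -/
theorem stmt10 (Δ : ℕ) (hΔ : 1 ≤ Δ)
    (LP LQ LR : List ℤ) (hP : LP ≠ []) (hQ : LQ ≠ []) (hR : LR ≠ [])
    (hPval : ∀ l ∈ LP, l ∈ Finset.Icc (1 : ℤ) (Δ : ℤ))
    (hQval : ∀ l ∈ LQ, l ∈ Finset.Icc (1 : ℤ) (Δ : ℤ))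
    (hRval : ∀ l ∈ LR, l ∈ Finset.Icc (1 : ℤ) (Δ : ℤ))
    (tv tu δ₀ : ℤ) (htv : tv = LQ.head!) (htu : tu = startT Δ tv LP)
    (hδ : δ₀ = durT Δ tv LQ - durT Δ tv LP)
    (h1 : durT Δ tv LP ≤ durT Δ tv LQ)
    (h2 : durT Δ tv (LQ ++ LR) ≤ durT Δ tv (LP ++ LR))
    (hne : tu ≠ tv) :
    δ₀ ≤ (Δ : ℤ) - 2 ∧ tv + δ₀ + 1 ≤ tu := by
  have hΔ' : (0 : ℤ) < (Δ : ℤ) := by exact_mod_cast hΔ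
  have hSQ : startT Δ tv LQ = tv := by simp [startT, htv]
  have htu' : tu - tv = (LP.head! - tv) % (Δ : ℤ) := by rw [htu]; simp [startT]
  have hm1 : 0 ≤ (LP.head! - tv) % (Δ : ℤ) := Int.emod_nonneg _ (ne_of_gt hΔ')
  have hm2 : (LP.head! - tv) % (Δ : ℤ) < (Δ : ℤ) := Int.emod_lt_of_pos _ hΔ'
  have htub1 : tv + 1 ≤ tu := by
    rcases lt_or_ge tv tu with h | h
    · linarith
    · exfalso; apply hne; linarith [htu', hm1]
  have htub2 : tu ≤ tv + (Δ : ℤ) - 1 := by linarith [htu', hm2]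
  set F : ℤ → ℤ := fun s => LR.foldl (fun s l => s + resDelta Δ l s) s with hF
  have hdQ : durT Δ tv LQ = arrT Δ tv LQ - tv + 1 := by rw [durT, hSQ]
  have hdP : durT Δ tv LP = arrT Δ tv LP - tu + 1 := by rw [durT, htu]
  have hdQR : durT Δ tv (LQ ++ LR) = F (arrT Δ tv LQ) - tv + 1 := by
    rw [durT, startT_append Δ tv LQ LR hQ, hSQ, arrT_append Δ tv LQ LR hQ]
  have hdPR : durT Δ tv (LP ++ LR) = F (arrT Δ tv LP) - tu + 1 := by
    rw [durT, startT_append Δ tv LP LR hP, ← htu, arrT_append Δ tv LP LR hP]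
  have hkey : arrT Δ tv LQ < arrT Δ tv LP := by
    by_contra hc
    push_neg at hc
    have hFmono : F (arrT Δ tv LP) ≤ F (arrT Δ tv LQ) := foldl_mono Δ hΔ LR hc
    rw [hdQR, hdPR] at h2
    linarith
  rw [hdQ, hdP] at hδ
  constructor <;> linarith
end

section
/- Let G be a connected graph with feedback edge number k, let T be a spanning tree of G with feedback edge set F, |F| = k, obtained after iteratively deleting all degree-one vertices (so G has minimum degree 2). Let V_1 be the set of leaves of T, V_2 the set of vertices of degree 2 in T incident to at least one edge of F, and V_3 the set of vertices of degree at least 3 in T. Then |V_1| + |V_2| ≤ 2k and |V_3| ≤ |V_1|, hence |V_1 ∪ V_2 ∪ V_3| ≤ 4k. -/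
open SimpleGraph

open scoped Classical in
/-- Let `G` be a connected graph of minimum degree `2` with spanning tree `T` and feedback
edge set `F = E(G) \ E(T)` of size `k`. With `V₁` the leaves of `T`, `V₂` the tree-degree-2
vertices incident to an edge of `F`, and `V₃` the vertices of tree-degree at least `3`:
`|V₁| + |V₂| ≤ 2k`, `|V₃| ≤ |V₁|`, and hence `|V₁ ∪ V₂ ∪ V₃| ≤ 4k`. -/
theorem stmt12 {V : Type*} [Fintype V] [DecidableEq V]
    (G T : SimpleGraph V) [DecidableRel G.Adj] [DecidableRel T.Adj]
    (hsub : T ≤ G) (htree : T.IsTree) (hG : G.Connected)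
    (hmin : ∀ v : V, 2 ≤ G.degree v)
    (k : ℕ) (hk : (G.edgeFinset \ T.edgeFinset).card = k) :
    (Finset.univ.filter fun v : V => T.degree v = 1).card +
        (Finset.univ.filter fun v : V =>
          T.degree v = 2 ∧ ∃ e ∈ G.edgeFinset \ T.edgeFinset, v ∈ e).card ≤ 2 * k ∧
    (Finset.univ.filter fun v : V => 3 ≤ T.degree v).card ≤
        (Finset.univ.filter fun v : V => T.degree v = 1).card ∧
    ((Finset.univ.filter fun v : V => T.degree v = 1) ∪
        (Finset.univ.filter fun v : V =>
          T.degree v = 2 ∧ ∃ e ∈ G.edgeFinset \ T.edgeFinset, v ∈ e) ∪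
        (Finset.univ.filter fun v : V => 3 ≤ T.degree v)).card ≤ 4 * k := by
  classical
  set F := G.edgeFinset \ T.edgeFinset with hF
  set A := Finset.univ.filter fun v : V => T.degree v = 1 with hA
  set B := Finset.univ.filter fun v : V =>
      T.degree v = 2 ∧ ∃ e ∈ F, v ∈ e with hB
  set C := Finset.univ.filter fun v : V => 3 ≤ T.degree v with hC
  -- every edge of F has exactly two endpoints
  have hcard2 : ∀ e ∈ F, (Finset.univ.filter fun v : V => v ∈ e).card = 2 := by
    intro e he
    have heG : e ∈ G.edgeSet := SimpleGraph.mem_edgeFinset.1 (Finset.mem_sdiff.1 he).1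
    have hnd : ¬ e.IsDiag := G.not_isDiag_of_mem_edgeSet heG
    revert hnd
    induction e using Sym2.ind with
    | _ a b =>
      intro hnd
      have hab : a ≠ b := by simpa [Sym2.isDiag_iff_proj_eq] using hnd
      have : (Finset.univ.filter fun v : V => v ∈ (s(a, b) : Sym2 V)) = {a, b} := by
        ext v; simp [Sym2.mem_iff]
      rw [this, Finset.card_insert_of_notMem (by simp [hab]), Finset.card_singleton]
  -- every vertex of A ∪ B lies on an edge of F
  have hincident : ∀ v ∈ A ∪ B, ∃ e ∈ F, v ∈ e := by
    intro v hv
    rcases Finset.mem_union.1 hv with hv | hv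
    · have hdeg : T.degree v = 1 := (Finset.mem_filter.1 hv).2
      have hsubN : T.neighborFinset v ⊆ G.neighborFinset v := by
        intro w hw
        rw [SimpleGraph.mem_neighborFinset] at *
        exact hsub hw
      have hpos : 0 < (G.neighborFinset v \ T.neighborFinset v).card := by
        rw [Finset.card_sdiff_of_subset hsubN]
        have h1 : (G.neighborFinset v).card = G.degree v := G.card_neighborFinset_eq_degree v
        have h2 : (T.neighborFinset v).card = T.degree v := T.card_neighborFinset_eq_degree v
        have := hmin v
        omega
      obtain ⟨w, hw⟩ := Finset.card_pos.1 hpos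
      rw [Finset.mem_sdiff, SimpleGraph.mem_neighborFinset, SimpleGraph.mem_neighborFinset] at hw
      refine ⟨s(v, w), ?_, by simp⟩
      rw [hF, Finset.mem_sdiff, SimpleGraph.mem_edgeFinset, SimpleGraph.mem_edgeFinset]
      exact ⟨hw.1, hw.2⟩
    · exact (Finset.mem_filter.1 hv).2.2
  have hdisjAB : Disjoint A B := by
    rw [Finset.disjoint_left]
    intro v hv hv'
    have h1 := (Finset.mem_filter.1 hv).2
    have h2 := (Finset.mem_filter.1 hv').2.1
    omega
  -- Part 1
  have h1 : A.card + B.card ≤ 2 * k := by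
    rw [← Finset.card_union_of_disjoint hdisjAB]
    calc (A ∪ B).card ≤ (F.biUnion fun e => Finset.univ.filter fun v : V => v ∈ e).card := by
          apply Finset.card_le_card
          intro v hv
          obtain ⟨e, heF, hve⟩ := hincident v hv
          exact Finset.mem_biUnion.2 ⟨e, heF, Finset.mem_filter.2 ⟨Finset.mem_univ v, hve⟩⟩
      _ ≤ ∑ e ∈ F, (Finset.univ.filter fun v : V => v ∈ e).card := Finset.card_biUnion_le
      _ = ∑ _e ∈ F, 2 := Finset.sum_congr rfl hcard2
      _ = 2 * k := by rw [Finset.sum_const, hk, smul_eq_mul, Nat.mul_comm]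
  -- every vertex has T-degree at least 1
  have hVcard : 3 ≤ Fintype.card V := by
    have : Nonempty V := hG.nonempty
    obtain ⟨v⟩ := this
    have h1 := hmin v
    have h2 : G.degree v < Fintype.card V := G.degree_lt_card_verts v
    omega
  have hdegpos : ∀ v : V, 1 ≤ T.degree v := by
    intro v
    by_contra h
    have h0 : ∀ w, ¬ T.Adj v w := by
      intro w hw
      have : 0 < T.degree v := by
        rw [← T.card_neighborFinset_eq_degree]
        exact Finset.card_pos.2 ⟨w, (T.mem_neighborFinset v w).2 hw⟩
      omega
    obtain ⟨w, hwv⟩ := Fintype.exists_ne_of_one_lt_card (by omega) v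
    obtain ⟨p⟩ := htree.isConnected.preconnected v w
    cases p with
    | nil => exact hwv rfl
    | cons hadj q => exact h0 _ hadj
  -- degree-2 vertices of T (regardless of F-incidence)
  set B' := Finset.univ.filter fun v : V => T.degree v = 2 with hB'
  have hdisjAB' : Disjoint A B' := by
    rw [Finset.disjoint_left]
    intro v hv hv'
    have h1 := (Finset.mem_filter.1 hv).2
    have h2 := (Finset.mem_filter.1 hv').2
    omega
  have hdisjABC : Disjoint (A ∪ B') C := by
    rw [Finset.disjoint_left]
    intro v hv hv'
    have h3 := (Finset.mem_filter.1 hv').2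
    rcases Finset.mem_union.1 hv with hv | hv
    · have := (Finset.mem_filter.1 hv).2; omega
    · have := (Finset.mem_filter.1 hv).2; omega
  have huniv : A ∪ B' ∪ C = Finset.univ := by
    ext v
    simp only [hA, hB', hC, Finset.mem_union, Finset.mem_filter, Finset.mem_univ, true_and,
      iff_true]
    have := hdegpos v
    omega
  have hsumA : ∑ v ∈ A, T.degree v = A.card := by
    rw [Finset.sum_congr rfl (fun v hv => (Finset.mem_filter.1 hv).2), Finset.sum_const,
      smul_eq_mul, Nat.mul_one]
  have hsumB : ∑ v ∈ B', T.degree v = 2 * B'.card := by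
    rw [Finset.sum_congr rfl (fun v hv => (Finset.mem_filter.1 hv).2), Finset.sum_const,
      smul_eq_mul, Nat.mul_comm]
  have hsumC : 3 * C.card ≤ ∑ v ∈ C, T.degree v := by
    calc 3 * C.card = ∑ _v ∈ C, 3 := by rw [Finset.sum_const, smul_eq_mul, Nat.mul_comm]
      _ ≤ ∑ v ∈ C, T.degree v :=
          Finset.sum_le_sum fun v hv => (Finset.mem_filter.1 hv).2
  have hsumall : ∑ v ∈ A, T.degree v + ∑ v ∈ B', T.degree v + ∑ v ∈ C, T.degree v
      = ∑ v, T.degree v := by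
    rw [← Finset.sum_union hdisjAB', ← Finset.sum_union hdisjABC, huniv]
  have hncard : A.card + B'.card + C.card = Fintype.card V := by
    rw [← Finset.card_union_of_disjoint hdisjAB', ← Finset.card_union_of_disjoint hdisjABC,
      huniv, Finset.card_univ]
  have hhand : ∑ v, T.degree v = 2 * T.edgeFinset.card :=
    T.sum_degrees_eq_twice_card_edges
  have hEcard : T.edgeFinset.card + 1 = Fintype.card V := htree.card_edgeFinset
  have h2 : C.card ≤ A.card := by omega
  refine ⟨h1, h2, ?_⟩
  calc (A ∪ B ∪ C).card ≤ (A ∪ B).card + C.card := Finset.card_union_le _ _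
    _ ≤ A.card + B.card + C.card := by
        have := Finset.card_union_le A B; omega
    _ ≤ 4 * k := by omega
end

section
/- Let G be a connected graph with minimum degree 2 and feedback edge number k, and let U be a set of at most 4k 'vertices of interest' containing all spanning-tree leaves, all tree-degree-2 vertices incident to feedback edges, and all vertices of tree-degree at least 3. Define a segment as a path in G between two vertices of U all of whose internal vertices lie outside U. Then every edge of G lies on at most one segment in each direction, and the number of distinct (ordered) segments in G is at most c·k² for a universal constant c; in particular, the number of segments in G is O(k²). -/
open SimpleGraph

private lemma seg_core {V : Type} {G : SimpleGraph V} {U : Set V}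
    (h2 : ∀ w, w ∉ U → ∀ x y z, G.Adj w x → G.Adj w y → G.Adj w z →
      x = y ∨ x = z ∨ y = z) :
    ∀ {w b : V} (p : G.Walk w b), ∀ {c a : V} (q : G.Walk w c),
      G.Adj a w → p.IsPath → q.IsPath → a ∉ p.support → a ∉ q.support →
      b ∈ U → c ∈ U →
      (∀ x ∈ p.support, x ≠ b → x ∉ U) →
      (∀ x ∈ q.support, x ≠ c → x ∉ U) →
      b = c ∧ HEq p q := by
  intro w b p
  induction p with
  | nil =>
    intro c a q hadj hp hq hap haq hb hc hintp hintq
    rename_i w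
    cases q with
    | nil => exact ⟨rfl, HEq.rfl⟩
    | cons h' q' =>
      exfalso
      have hwc : w ≠ c := by
        rintro rfl
        have hnd := hq.support_nodup
        rw [Walk.support_cons] at hnd
        exact (List.nodup_cons.mp hnd).1 (Walk.end_mem_support q')
      exact hintq w (Walk.start_mem_support _) hwc hb
  | cons h p' ih =>
    rename_i w x b
    intro c a q hadj hp hq hap haq hb hc hintp hintq
    have hwp' : w ∉ p'.support := ((Walk.cons_isPath_iff _ _).mp hp).2
    have hwb : w ≠ b := fun hh => hwp' (hh ▸ Walk.end_mem_support p')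
    have hwU : w ∉ U := hintp w (Walk.start_mem_support _) hwb
    cases q with
    | nil => exact absurd hc hwU
    | cons h'' q' =>
      rename_i y
      have hxa : x ≠ a := by
        rintro rfl
        exact hap (by simp [Walk.support_cons, Walk.start_mem_support])
      have hya : y ≠ a := by
        rintro rfl
        exact haq (by simp [Walk.support_cons, Walk.start_mem_support])
      have hxy : x = y := by
        rcases h2 w hwU x y a h h'' hadj.symm with h1 | h1 | h1
        · exact h1
        · exact absurd h1 hxa
        · exact absurd h1 hya
      subst hxy
      have hwq' : w ∉ q'.support := ((Walk.cons_isPath_iff _ _).mp hq).2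
      obtain ⟨hbc, hpq⟩ := ih q' (a := w) h hp.of_cons hq.of_cons hwp' hwq' hb hc
        (fun z hz hzb => hintp z (by simp [Walk.support_cons, hz]) hzb)
        (fun z hz hzc => hintq z (by simp [Walk.support_cons, hz]) hzc)
      subst hbc
      exact ⟨rfl, heq_of_eq (by rw [eq_of_heq hpq])⟩

private lemma seg_split {V : Type} {G : SimpleGraph V} :
    ∀ {u v : V} (p : G.Walk u v) (d : G.Dart), d ∈ p.darts →
      ∃ (t : G.Walk u d.fst) (s : G.Walk d.snd v),
        p = t.append (Walk.cons d.adj s) := by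
  intro u v p
  induction p with
  | nil => intro d hd; simp at hd
  | cons h p' ih =>
    intro d hd
    rw [Walk.darts_cons, List.mem_cons] at hd
    rcases hd with hd | hd
    · subst hd
      exact ⟨Walk.nil, p', by simp⟩
    · obtain ⟨t, s, rfl⟩ := ih d hd
      exact ⟨Walk.cons h t, s, by rw [Walk.cons_append]⟩

private lemma firstDart_mem_darts {V : Type} {G : SimpleGraph V} {u v : V}
    (p : G.Walk u v) (hp : ¬ p.Nil) : p.firstDart hp ∈ p.darts := by
  cases p with
  | nil => simp at hp
  | cons h q =>
    rw [Walk.darts_cons, List.mem_cons]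
    left
    ext
    · rfl
    · simp [Walk.firstDart]

private lemma seg_unique {V : Type} {G : SimpleGraph V} {U : Set V}
    (h2 : ∀ w, w ∉ U → ∀ x y z, G.Adj w x → G.Adj w y → G.Adj w z →
      x = y ∨ x = z ∨ y = z)
    {u v u' v' : V} (p : G.Walk u v) (q : G.Walk u' v')
    (hp : p.IsPath) (hq : q.IsPath)
    (hu : u ∈ U) (hv : v ∈ U) (hu' : u' ∈ U) (hv' : v' ∈ U)
    (hintp : ∀ x ∈ p.support, x ≠ u → x ≠ v → x ∉ U)
    (hintq : ∀ x ∈ q.support, x ≠ u' → x ≠ v' → x ∉ U)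
    (d : G.Dart) (hdp : d ∈ p.darts) (hdq : d ∈ q.darts) :
    u = u' ∧ v = v' ∧ HEq p q := by
  obtain ⟨t, s, rfl⟩ := seg_split p d hdp
  obtain ⟨t', s', rfl⟩ := seg_split q d hdq
  have hnd : (t.support ++ s.support).Nodup := by
    have hh := hp.support_nodup
    rwa [Walk.support_append, Walk.support_cons, List.tail_cons] at hh
  have hnd' : (t'.support ++ s'.support).Nodup := by
    have hh := hq.support_nodup
    rwa [Walk.support_append, Walk.support_cons, List.tail_cons] at hh
  have hdisj := List.disjoint_of_nodup_append hnd
  have hdisj' := List.disjoint_of_nodup_append hnd'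
  have ht : t.IsPath := hp.of_append_left
  have ht' : t'.IsPath := hq.of_append_left
  have hcs : (Walk.cons d.adj s).IsPath := hp.of_append_right
  have hcs' : (Walk.cons d.adj s').IsPath := hq.of_append_right
  have hs : s.IsPath := hcs.of_cons
  have hs' : s'.IsPath := hcs'.of_cons
  have hfs : d.fst ∉ s.support := ((Walk.cons_isPath_iff _ _).mp hcs).2
  have hfs' : d.fst ∉ s'.support := ((Walk.cons_isPath_iff _ _).mp hcs').2
  -- membership helpers
  have hmemp : ∀ x, x ∈ t.support ∨ x ∈ s.support →
      x ∈ (t.append (Walk.cons d.adj s)).support := by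
    intro x hx
    rw [Walk.mem_support_append_iff]
    rcases hx with hx | hx
    · exact Or.inl hx
    · exact Or.inr (by simp [Walk.support_cons, hx])
  have hmemq : ∀ x, x ∈ t'.support ∨ x ∈ s'.support →
      x ∈ (t'.append (Walk.cons d.adj s')).support := by
    intro x hx
    rw [Walk.mem_support_append_iff]
    rcases hx with hx | hx
    · exact Or.inl hx
    · exact Or.inr (by simp [Walk.support_cons, hx])
  -- forward
  obtain ⟨hvv, hheq⟩ := seg_core h2 s s' (a := d.fst) d.adj hs hs' hfs hfs' hv hv'
    (fun x hx hxv => hintp x (hmemp x (Or.inr hx))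
      (fun hxu => (hdisj (hxu ▸ Walk.start_mem_support t) : _) (hxu ▸ hx))
      hxv)
    (fun x hx hxv => hintq x (hmemq x (Or.inr hx))
      (fun hxu => (hdisj' (hxu ▸ Walk.start_mem_support t') : _) (hxu ▸ hx))
      hxv)
  subst hvv
  have hss : s = s' := eq_of_heq hheq
  -- backward
  have hsnd_t : d.snd ∉ t.support := fun hh => hdisj hh (Walk.start_mem_support s)
  have hsnd_t' : d.snd ∉ t'.support := fun hh => hdisj' hh (Walk.start_mem_support s')
  obtain ⟨huu, hheq2⟩ := seg_core h2 t.reverse t'.reverse (a := d.snd) d.adj.symm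
    ht.reverse ht'.reverse
    (by rwa [Walk.support_reverse, List.mem_reverse])
    (by rwa [Walk.support_reverse, List.mem_reverse])
    hu hu'
    (by
      intro x hx hxu
      rw [Walk.support_reverse, List.mem_reverse] at hx
      exact hintp x (hmemp x (Or.inl hx)) hxu
        (fun hxv => (hdisj (hxv ▸ hx) : _) (hxv ▸ Walk.end_mem_support s)))
    (by
      intro x hx hxu
      rw [Walk.support_reverse, List.mem_reverse] at hx
      exact hintq x (hmemq x (Or.inl hx)) hxu
        (fun hxv => (hdisj' (hxv ▸ hx) : _) (hxv ▸ Walk.end_mem_support s')))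
  subst huu
  have htt : t = t' := by
    have hh : t.reverse = t'.reverse := eq_of_heq hheq2
    rw [← Walk.reverse_reverse t, hh, Walk.reverse_reverse]
  exact ⟨rfl, rfl, heq_of_eq (by rw [htt, hss])⟩

/-- There is a universal constant `c` such that: for every connected graph `G` of minimum
degree `2` with spanning tree `T`, feedback edge set `F = E(G) \ E(T)` of size `k`, and a
set `U` of vertices of interest with `|U| ≤ 4k` containing all leaves of `T`, all
tree-degree-2 vertices incident to a feedback edge, and all vertices of tree-degree `≥ 3`,
the collection of segments (paths of `G` between two vertices of `U` all of whose internal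
vertices avoid `U`) satisfies: any two segments sharing a dart (a traversal of an edge in a
fixed direction) are equal, and the number of distinct ordered segments is at most
`c · k²`. -/
theorem stmt13 :
    ∃ c : ℕ, ∀ (V : Type) (_ : Fintype V) (_ : DecidableEq V)
      (G T : SimpleGraph V) (_ : DecidableRel G.Adj) (_ : DecidableRel T.Adj)
      (_ : T ≤ G) (_ : T.IsTree) (_ : G.Connected)
      (_ : ∀ v : V, 2 ≤ G.degree v)
      (k : ℕ) (_ : (G.edgeFinset \ T.edgeFinset).card = k)
      (U : Set V)
      (_ : ∀ v : V, T.degree v = 1 → v ∈ U)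
      (_ : ∀ v : V, T.degree v = 2 →
        (∃ e ∈ G.edgeFinset \ T.edgeFinset, v ∈ e) → v ∈ U)
      (_ : ∀ v : V, 3 ≤ T.degree v → v ∈ U)
      (_ : U.ncard ≤ 4 * k),
      (∀ p q : Σ u v : V, G.Walk u v,
        p ∈ {p : Σ u v : V, G.Walk u v | p.2.2.IsPath ∧ p.1 ∈ U ∧ p.2.1 ∈ U ∧
          ∀ x ∈ p.2.2.support, x ≠ p.1 → x ≠ p.2.1 → x ∉ U} →
        q ∈ {p : Σ u v : V, G.Walk u v | p.2.2.IsPath ∧ p.1 ∈ U ∧ p.2.1 ∈ U ∧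
          ∀ x ∈ p.2.2.support, x ≠ p.1 → x ≠ p.2.1 → x ∉ U} →
        (∃ d : G.Dart, d ∈ p.2.2.darts ∧ d ∈ q.2.2.darts) → p = q) ∧
      {p : Σ u v : V, G.Walk u v | p.2.2.IsPath ∧ p.1 ∈ U ∧ p.2.1 ∈ U ∧
          ∀ x ∈ p.2.2.support, x ≠ p.1 → x ≠ p.2.1 → x ∉ U}.ncard ≤ c * k ^ 2 := by
  use 14
  intro V instF instD G T instGA instTA hTG hTree hConn hmin k hk U hU1 hU2 hU3 hUcard
  classical
  set S := {p : Σ u v : V, G.Walk u v | p.2.2.IsPath ∧ p.1 ∈ U ∧ p.2.1 ∈ U ∧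
      ∀ x ∈ p.2.2.support, x ≠ p.1 → x ≠ p.2.1 → x ∉ U} with hS
  -- every vertex outside U has T-degree 2
  have hTdeg2 : ∀ w, w ∉ U → T.degree w = 2 := by
    intro w hw
    have h1 : T.degree w ≠ 1 := fun hh => hw (hU1 w hh)
    have h3 : ¬ 3 ≤ T.degree w := fun hh => hw (hU3 w hh)
    have h0 : T.degree w ≠ 0 := by
      intro hh
      obtain ⟨x, hwx⟩ := (G.degree_pos_iff_exists_adj w).mp
        (lt_of_lt_of_le (by norm_num) (hmin w))
      have hr : T.Reachable w x := (hTree.isConnected w x : _)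
      obtain ⟨pw⟩ := hr
      have hnn : ¬ pw.Nil := Walk.not_nil_of_ne hwx.ne
      have : T.Adj w (pw.getVert 1) := pw.adj_snd hnn
      exact absurd ((T.degree_pos_iff_exists_adj w).mpr ⟨_, this⟩) (by omega)
    omega
  -- outside U, G-adjacency implies T-adjacency
  have hGadj : ∀ w, w ∉ U → ∀ x, G.Adj w x → T.Adj w x := by
    intro w hw x hwx
    by_contra hnt
    refine hw (hU2 w (hTdeg2 w hw) ⟨s(w, x), ?_, ?_⟩)
    · rw [Finset.mem_sdiff, mem_edgeFinset, mem_edgeFinset]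
      exact ⟨hwx, hnt⟩
    · exact Sym2.mem_mk_left w x
  -- outside U, at most two neighbors
  have h2 : ∀ w, w ∉ U → ∀ x y z, G.Adj w x → G.Adj w y → G.Adj w z →
      x = y ∨ x = z ∨ y = z := by
    intro w hw x y z hx hy hz
    by_contra hcon
    push_neg at hcon
    obtain ⟨hxy, hxz, hyz⟩ := hcon
    have hsub : ({x, y, z} : Finset V) ⊆ T.neighborFinset w := by
      intro a ha
      simp only [Finset.mem_insert, Finset.mem_singleton] at ha
      rw [mem_neighborFinset]
      rcases ha with rfl | rfl | rfl
      · exact hGadj w hw a hx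
      · exact hGadj w hw a hy
      · exact hGadj w hw a hz
    have hcard : ({x, y, z} : Finset V).card = 3 := by
      rw [Finset.card_insert_of_notMem (by simp [hxy, hxz]),
        Finset.card_insert_of_notMem (by simp [hyz]), Finset.card_singleton]
    have := Finset.card_le_card hsub
    rw [hcard, ← degree, hTdeg2 w hw] at this
    omega
  constructor
  · rintro ⟨u, v, pw⟩ ⟨u', v', qw⟩ hp hq ⟨d, hdp, hdq⟩
    simp only [hS, Set.mem_setOf_eq] at hp hq
    obtain ⟨hp1, hp2, hp3, hp4⟩ := hp
    obtain ⟨hq1, hq2, hq3, hq4⟩ := hq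
    obtain ⟨rfl, rfl, hheq⟩ := seg_unique h2 pw qw hp1 hq1 hp2 hp3 hq2 hq3 hp4 hq4 d hdp hdq
    rw [eq_of_heq hheq]
  · -- counting
    have hUfin : U.Finite := Set.toFinite U
    set UF : Finset V := hUfin.toFinset with hUF
    have hUFcard : UF.card = U.ncard := by
      rw [Set.ncard_eq_toFinset_card _ hUfin]
    set D : Finset G.Dart := Finset.univ.filter (fun d => d.fst ∈ U) with hD
    set f : (Σ u v : V, G.Walk u v) → V ⊕ G.Dart :=
      fun p => if h : p.2.2.Nil then Sum.inl p.1 else Sum.inr (p.2.2.firstDart h) with hf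
    have hmaps : f '' S ⊆ (Sum.inl '' U) ∪ (Sum.inr '' (D : Set G.Dart)) := by
      rintro _ ⟨⟨a, b, w⟩, hmem, rfl⟩
      obtain ⟨hw1, hw2, hw3, hw4⟩ := hmem
      by_cases h : w.Nil
      · exact Or.inl ⟨a, hw2, by simp [hf, h]⟩
      · refine Or.inr ⟨w.firstDart h, ?_, by simp [hf, h]⟩
        rw [hD]
        simp only [Finset.coe_filter, Set.mem_setOf_eq, Finset.mem_univ, true_and]
        exact hw2
    have hinj : Set.InjOn f S := by
      rintro ⟨a, b, w⟩ hmem ⟨a', b', w'⟩ hmem' hfeq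
      obtain ⟨hw1, hw2, hw3, hw4⟩ := hmem
      obtain ⟨hw1', hw2', hw3', hw4'⟩ := hmem'
      by_cases h : w.Nil <;> by_cases h' : w'.Nil <;>
        simp only [hf, h, h', dif_pos, dif_neg, not_false_iff] at hfeq
      · obtain rfl : a = b := h.eq
        obtain rfl : a' = b' := h'.eq
        obtain rfl : a = a' := by simpa using hfeq
        rw [h.eq_nil, h'.eq_nil]
      · simp at hfeq
      · simp at hfeq
      · have hd : w.firstDart h = w'.firstDart h' := by simpa using hfeq
        have hdp := firstDart_mem_darts w h
        have hdq := firstDart_mem_darts w' h'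
        rw [hd] at hdp
        obtain ⟨rfl, rfl, hheq⟩ := seg_unique h2 w w' hw1 hw1' hw2 hw3 hw2' hw3'
          hw4 hw4' _ hdp hdq
        rw [eq_of_heq hheq]
    have hstep1 : S.ncard ≤ U.ncard + D.card := by
      calc S.ncard = (f '' S).ncard := (Set.ncard_image_of_injOn hinj).symm
        _ ≤ ((Sum.inl '' U) ∪ (Sum.inr '' (D : Set G.Dart))).ncard :=
            Set.ncard_le_ncard hmaps (Set.toFinite _)
        _ ≤ (Sum.inl '' U).ncard + (Sum.inr '' (D : Set G.Dart)).ncard :=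
            Set.ncard_union_le _ _
        _ = U.ncard + D.card := by
            rw [Set.ncard_image_of_injective _ Sum.inl_injective,
              Set.ncard_image_of_injective _ Sum.inr_injective, Set.ncard_coe_finset]
    have hDcard : D.card = ∑ u ∈ UF, G.degree u := by
      rw [Finset.card_eq_sum_card_fiberwise
        (f := fun d : G.Dart => d.fst) (t := UF) ?_]
      · refine Finset.sum_congr rfl (fun u hu => ?_)
        rw [hUF, Set.Finite.mem_toFinset] at hu
        rw [← G.dart_fst_fiber_card_eq_degree]
        congr 1
        ext d
        simp only [hD, Finset.mem_filter, Finset.mem_univ, true_and,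
          and_iff_right_iff_imp]
        intro hdu; rw [hdu]; exact hu
      · intro d hd
        have hd' : d.fst ∈ U := by simpa [hD] using hd
        rw [Finset.mem_coe, hUF, Set.Finite.mem_toFinset]
        exact hd'
    haveI instSD : DecidableRel (G \ T).Adj := fun a b =>
      decidable_of_iff (G.Adj a b ∧ ¬ T.Adj a b) (sdiff_adj G T a b).symm
    have hdegsplit : ∀ u : V, G.degree u ≤ T.degree u + (G \ T).degree u := by
      intro u
      have hsub : G.neighborFinset u ⊆
          T.neighborFinset u ∪ (G \ T).neighborFinset u := by
        intro x hx
        rw [mem_neighborFinset] at hx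
        rw [Finset.mem_union, mem_neighborFinset, mem_neighborFinset, sdiff_adj]
        by_cases hT : T.Adj u x
        · exact Or.inl hT
        · exact Or.inr ⟨hx, hT⟩
      calc G.degree u ≤ (T.neighborFinset u ∪ (G \ T).neighborFinset u).card :=
            Finset.card_le_card hsub
        _ ≤ T.degree u + (G \ T).degree u := Finset.card_union_le _ _
    have hFB : ∑ u ∈ UF, (G \ T).degree u ≤ 2 * k := by
      have h1 : ∑ u : V, (G \ T).degree u = 2 * k := by
        rw [(G \ T).sum_degrees_eq_twice_card_edges, ← hk]
        congr 1
        congr 1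
        ext e
        simp only [mem_edgeFinset, Finset.mem_sdiff, edgeSet_sdiff, Set.mem_diff,
          mem_edgeFinset]
      rw [← h1]
      exact Finset.sum_le_sum_of_subset (Finset.subset_univ _)
    have hn1 : 1 ≤ Fintype.card V := Fintype.card_pos_iff.mpr hConn.nonempty
    have hTsum : ∑ u ∈ UF, T.degree u + ∑ u ∈ UFᶜ, T.degree u =
        2 * (Fintype.card V - 1) := by
      have hc := hTree.card_edgeFinset
      rw [Finset.sum_add_sum_compl, T.sum_degrees_eq_twice_card_edges]
      omega
    have hcompl : ∑ u ∈ UFᶜ, T.degree u = 2 * (Fintype.card V - UF.card) := by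
      have hh : ∀ w ∈ UFᶜ, T.degree w = 2 := by
        intro w hw
        refine hTdeg2 w ?_
        rw [Finset.mem_compl, hUF, Set.Finite.mem_toFinset] at hw
        exact hw
      rw [Finset.sum_congr rfl hh, Finset.sum_const, Finset.card_compl,
        smul_eq_mul, Nat.mul_comm]
    have hUFle : UF.card ≤ Fintype.card V := Finset.card_le_univ _
    have hGsum : ∑ u ∈ UF, G.degree u ≤
        ∑ u ∈ UF, T.degree u + ∑ u ∈ UF, (G \ T).degree u := by
      rw [← Finset.sum_add_distrib]
      exact Finset.sum_le_sum (fun u _ => hdegsplit u)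
    have hfinal : S.ncard ≤ 14 * k := by omega
    calc S.ncard ≤ 14 * k := hfinal
      _ ≤ 14 * k ^ 2 := Nat.mul_le_mul_left 14 (Nat.le_self_pow two_ne_zero k)
end

section
/- Let φ be a satisfiable NAE-3-SAT formula, and construct the temporal graph (G, λ) from a satisfying assignment as follows: G has variable vertices x_i, x_i^T, x_i^F for each variable, clause vertices c, and a super vertex v, with edges as in the reduction; all edges incident to clause vertices get label 1; λ(x_i^F v) = 3 if x_i is true, λ(x_i^T v) = 3 if x_i is false; all other edges get label 2. Then in the Δ-periodic temporal graph (G, λ, Δ) with Δ ≥ 3: for every variable x_i, the duration of a fastest temporal path from x_i to v is 2 and from v to x_i is Δ; and for every clause c, the duration of a fastest temporal path from c to v is 2 and from v to c is Δ − 1. -/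
/-!
Every claimed optimum is attained by a two-edge path: `x_i → ℓ → v` at times `2, 3` and
`v → ℓ → x_i` at times `3, Δ + 2`, where `ℓ` is the literal of `x_i` that `σ` falsifies (so
`λ(ℓ v) = 3`); `c → ℓ → v` at times `1, 2` through a literal `ℓ` of `c` that `σ` satisfies, and
`v → ℓ → c` at times `3, Δ + 1` through one it falsifies. Both exist because `σ` is a NAE
assignment. Conversely, none of these pairs is adjacent, so a temporal path has two distinct
departure times, which gives duration `≥ 2`; from `v` the first edge has label `2` or `3`, while
every edge into `x_i` (resp. `c`) has label `2` (resp. `1`), so periodicity forces the last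
departure to come at least `Δ − 1` (resp. `Δ − 2`) after the first.
-/

open SimpleGraph

/-- A literal: a variable index together with its polarity (`true` = non-negated). -/
abbrev Lit := ℕ × Bool

/-- A NAE-3-SAT clause: three literals. -/
abbrev Clause := Lit × Lit × Lit

/-- The literal `l` evaluates to true under the assignment `σ`. -/
def evalLit (σ : ℕ → Bool) (l : Lit) : Prop := σ l.1 = l.2

/-- `l` is one of the three literals of clause `C`. -/
def inClause (l : Lit) (C : Clause) : Prop := l = C.1 ∨ l = C.2.1 ∨ l = C.2.2

/-- The vertices of the reduction graph: variable vertices `x i`, `xT i`, `xF i`,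
clause vertices `cl j`, and the super vertex `sup`. -/
inductive Vtx : Type
  | x (i : ℕ) | xT (i : ℕ) | xF (i : ℕ) | cl (j : ℕ) | sup
  deriving DecidableEq

/-- The vertex corresponding to a literal: `xT i` if positive, `xF i` if negated. -/
def litVtx (l : Lit) : Vtx := if l.2 then Vtx.xT l.1 else Vtx.xF l.1

/-- The edge relation of the reduction graph for a formula `φ` with `n` variables. -/
def NAERel (n : ℕ) (φ : List Clause) : Vtx → Vtx → Prop := fun a b =>
  (∃ i < n, a = Vtx.x i ∧ (b = Vtx.xT i ∨ b = Vtx.xF i)) ∨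
  (∃ i < n, a = Vtx.xT i ∧ b = Vtx.xF i) ∨
  (∃ i < n, (a = Vtx.xT i ∨ a = Vtx.xF i) ∧ b = Vtx.sup) ∨
  (∃ i < n, ∃ j < n, i ≠ j ∧ (a = Vtx.xT i ∨ a = Vtx.xF i) ∧ (b = Vtx.xT j ∨ b = Vtx.xF j)) ∨
  (∃ j < φ.length, ∃ l : Lit, inClause l (φ.getD j default) ∧ a = Vtx.cl j ∧ b = litVtx l)

open Classical in
/-- The labeling constructed from a satisfying assignment `σ`: edges incident to clause
vertices get label `1`; the edge `x_i^F v` gets label `3` if `x_i` is true, the edge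
`x_i^T v` gets label `3` if `x_i` is false; all other edges get label `2`. -/
noncomputable def redLab (σ : ℕ → Bool) : Vtx → Vtx → ℤ := fun a b =>
  if (∃ j, a = Vtx.cl j) ∨ (∃ j, b = Vtx.cl j) then 1
  else if ∃ i, σ i = true ∧
      ((a = Vtx.xF i ∧ b = Vtx.sup) ∨ (b = Vtx.xF i ∧ a = Vtx.sup)) then 3
  else if ∃ i, σ i = false ∧
      ((a = Vtx.xT i ∧ b = Vtx.sup) ∨ (b = Vtx.xT i ∧ a = Vtx.sup)) then 3
  else 2

/-- `times` is a valid schedule of strictly increasing Δ-periodic activation times for the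
walk `W`, where the (directed) edge from `a` to `b` is active at times `≡ lab a b (mod Δ)`. -/
def IsTemporalWalkD {V : Type*} (G : SimpleGraph V) (Δ : ℕ) (lab : V → V → ℤ)
    {u v : V} (W : G.Walk u v) (times : List ℤ) : Prop :=
  List.Forall₂ (fun (d : G.Dart) t => 1 ≤ t ∧ t ≡ lab d.toProd.1 d.toProd.2 [ZMOD (Δ : ℤ)])
    W.darts times ∧ times.Chain' (· < ·)

/-- There is a temporal path from `u` to `v` of duration `d`. -/
def HasDurD {V : Type*} (G : SimpleGraph V) (Δ : ℕ) (lab : V → V → ℤ)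
    (u v : V) (d : ℤ) : Prop :=
  ∃ (W : G.Walk u v) (times : List ℤ), W.IsPath ∧ times ≠ [] ∧
    IsTemporalWalkD G Δ lab W times ∧ times.getLast! - times.head! + 1 = d

/-- `d` is the duration of a fastest temporal path from `u` to `v`. -/
def IsFastestD {V : Type*} (G : SimpleGraph V) (Δ : ℕ) (lab : V → V → ℤ)
    (u v : V) (d : ℤ) : Prop :=
  HasDurD G Δ lab u v d ∧ ∀ d', HasDurD G Δ lab u v d' → d ≤ d'


section TemporalPaths

variable {V : Type*} {G : SimpleGraph V} {Δ : ℕ} {lab : V → V → ℤ}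

theorem Int.add_sub_le_sub_of_modEq {D a b s t : ℤ} (hs : s ≡ a [ZMOD D])
    (ht : t ≡ b [ZMOD D]) (hst : s < t) (hba : b ≤ a) : D + b - a ≤ t - s := by
  have hdvd : D ∣ (t - s) - (b - a) := ((ht.sub hs).symm).dvd
  have := Int.le_of_dvd (by omega) hdvd
  omega

theorem HasDurD.exists_first_last {u v : V} {d : ℤ} (hnadj : ¬ G.Adj u v)
    (h : HasDurD G Δ lab u v d) :
    ∃ w₁ w₂ s t, G.Adj u w₁ ∧ G.Adj w₂ v ∧ s ≡ lab u w₁ [ZMOD Δ] ∧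
      t ≡ lab w₂ v [ZMOD Δ] ∧ s < t ∧ d = t - s + 1 := by
  obtain ⟨W, times, -, hne, ⟨hR, hchain⟩, rfl⟩ := h
  have hlen : W.darts.length = times.length := hR.length_eq
  have htwo : 2 ≤ times.length := by
    have : W.length ≠ 1 := fun h1 => hnadj (W.adj_of_length_eq_one h1)
    have : 0 < times.length := List.length_pos_iff.mpr hne
    simp only [Walk.length_darts] at hlen
    omega
  set L := times.length
  have hfirst := hR.get (i := 0) (by omega) (by omega)
  have hlast := hR.get (i := L - 1) (by omega) (by omega)
  have hu : (W.darts[0]'(by omega)).fst = u := by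
    simp [Walk.darts_getElem_eq_getVert]
  have hv : (W.darts[L - 1]'(by omega)).snd = v := by
    simp only [Walk.darts_getElem_eq_getVert, Walk.length_darts] at hlen ⊢
    rw [Nat.sub_add_cancel (by omega), ← hlen, Walk.getVert_length]
  simp only [List.get_eq_getElem] at hfirst hlast
  refine ⟨_, _, _, _, hu ▸ (W.darts[0]).adj, hv ▸ (W.darts[L - 1]).adj,
    hu ▸ hfirst.2, hv ▸ hlast.2, ?_, ?_⟩
  · exact List.pairwise_iff_getElem.mp (List.isChain_iff_pairwise.mp hchain) _ _ _ _ (by omega)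
  · rw [List.head!_eq_getElem!, List.getLast!_eq_getElem!, getElem!_pos, getElem!_pos]

theorem HasDurD.two_le {u v : V} {d : ℤ} (hnadj : ¬ G.Adj u v) (h : HasDurD G Δ lab u v d) :
    2 ≤ d := by
  obtain ⟨_, _, _, _, -, -, -, -, hst, rfl⟩ := h.exists_first_last hnadj
  omega

theorem hasDurD_of_adj_of_adj {a b c : V} (hab : G.Adj a b) (hbc : G.Adj b c) (hac : a ≠ c)
    {s t : ℤ} (hs : 1 ≤ s) (hst : s < t) (hs' : s ≡ lab a b [ZMOD Δ])
    (ht' : t ≡ lab b c [ZMOD Δ]) : HasDurD G Δ lab a c (t - s + 1) := by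
  refine ⟨.cons hab (.cons hbc .nil), [s, t], ?_, by simp, ⟨?_, List.isChain_pair.mpr hst⟩, by simp⟩
  · simp [Walk.isPath_def, hab.ne, hbc.ne, hac]
  · exact .cons ⟨hs, hs'⟩ (.cons ⟨by omega, ht'⟩ .nil)

end TemporalPaths

section ReductionGraph

variable {n : ℕ} {φ : List Clause}

theorem litVtx_ne_x (l : Lit) (i : ℕ) : litVtx l ≠ Vtx.x i := by
  unfold litVtx; split <;> simp

theorem litVtx_ne_cl (l : Lit) (j : ℕ) : litVtx l ≠ Vtx.cl j := by
  unfold litVtx; split <;> simp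

theorem exists_litVtx_iff {w : Vtx} :
    (∃ l, w = litVtx l) ↔ ∃ i, w = Vtx.xT i ∨ w = Vtx.xF i := by
  constructor
  · rintro ⟨⟨i, _ | _⟩, rfl⟩ <;> simp [litVtx]
  · rintro ⟨i, rfl | rfl⟩
    exacts [⟨(i, true), rfl⟩, ⟨(i, false), rfl⟩]

theorem adj_x_litVtx {i : ℕ} (hi : i < n) (b : Bool) :
    (fromRel (NAERel n φ)).Adj (Vtx.x i) (litVtx (i, b)) := by
  cases b <;> simp [NAERel, litVtx, hi]

theorem adj_litVtx_sup {l : Lit} (hl : l.1 < n) :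
    (fromRel (NAERel n φ)).Adj (litVtx l) Vtx.sup := by
  obtain ⟨i, _ | _⟩ := l <;> simp_all [NAERel, litVtx]

theorem adj_cl_litVtx {j : ℕ} {l : Lit} (hj : j < φ.length)
    (hl : inClause l (φ.getD j default)) :
    (fromRel (NAERel n φ)).Adj (Vtx.cl j) (litVtx l) :=
  (fromRel_adj _ _ _).mpr ⟨(litVtx_ne_cl l j).symm,
    .inl (.inr (.inr (.inr (.inr ⟨j, hj, l, hl, rfl, rfl⟩))))⟩

theorem exists_litVtx_of_adj_sup {w : Vtx}
    (h : (fromRel (NAERel n φ)).Adj Vtx.sup w) : ∃ l, w = litVtx l := by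
  rw [exists_litVtx_iff]
  simp only [fromRel_adj, NAERel, litVtx] at h
  grind

theorem exists_litVtx_of_adj_x {w : Vtx} {i : ℕ}
    (h : (fromRel (NAERel n φ)).Adj w (Vtx.x i)) : ∃ l, w = litVtx l := by
  rw [exists_litVtx_iff]
  simp only [fromRel_adj, NAERel, litVtx] at h
  grind

end ReductionGraph

section Labels

variable (σ : ℕ → Bool)

theorem redLab_comm (a b : Vtx) : redLab σ a b = redLab σ b a := by
  unfold redLab
  split_ifs <;> grind

theorem redLab_cl (j : ℕ) (b : Vtx) : redLab σ (Vtx.cl j) b = 1 :=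
  if_pos (.inl ⟨j, rfl⟩)

theorem redLab_x_litVtx (i : ℕ) (l : Lit) : redLab σ (Vtx.x i) (litVtx l) = 2 := by
  obtain ⟨k, _ | _⟩ := l <;> simp [redLab, litVtx]

variable {σ}

theorem redLab_litVtx_sup_of_evalLit {l : Lit} (hl : evalLit σ l) :
    redLab σ (litVtx l) Vtx.sup = 2 := by
  obtain ⟨k, _ | _⟩ := l <;> simp_all [evalLit, redLab, litVtx]

theorem redLab_litVtx_sup_of_not_evalLit {l : Lit} (hl : ¬ evalLit σ l) :
    redLab σ (litVtx l) Vtx.sup = 3 := by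
  obtain ⟨k, _ | _⟩ := l <;> simp_all [evalLit, redLab, litVtx]

end Labels

section FastestPaths

variable {n : ℕ} {φ : List Clause} {σ : ℕ → Bool} {Δ : ℕ}

theorem not_adj_sup_x (i : ℕ) : ¬ (fromRel (NAERel n φ)).Adj Vtx.sup (Vtx.x i) :=
  fun h => (exists_litVtx_of_adj_sup h).elim fun l hl => litVtx_ne_x l i hl.symm

theorem not_adj_sup_cl (j : ℕ) : ¬ (fromRel (NAERel n φ)).Adj Vtx.sup (Vtx.cl j) :=
  fun h => (exists_litVtx_of_adj_sup h).elim fun l hl => litVtx_ne_cl l j hl.symm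

theorem redLab_of_adj_x {w : Vtx} {i : ℕ} (h : (fromRel (NAERel n φ)).Adj w (Vtx.x i)) :
    redLab σ w (Vtx.x i) = 2 := by
  obtain ⟨l, rfl⟩ := exists_litVtx_of_adj_x h
  rw [redLab_comm, redLab_x_litVtx]

theorem HasDurD.add_sub_two_le_of_sup {v : Vtx} {e d : ℤ}
    (hnadj : ¬ (fromRel (NAERel n φ)).Adj Vtx.sup v)
    (hin : ∀ w, (fromRel (NAERel n φ)).Adj w v → redLab σ w v = e) (he : e ≤ 2)
    (h : HasDurD (fromRel (NAERel n φ)) Δ (redLab σ) Vtx.sup v d) :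
    Δ + e - 2 ≤ d := by
  obtain ⟨w₁, w₂, s, t, h₁, h₂, hs, ht, hst, rfl⟩ := h.exists_first_last hnadj
  obtain ⟨l, rfl⟩ := exists_litVtx_of_adj_sup h₁
  rw [redLab_comm] at hs
  rw [hin w₂ h₂] at ht
  have hl : 2 ≤ redLab σ (litVtx l) Vtx.sup ∧ redLab σ (litVtx l) Vtx.sup ≤ 3 := by
    by_cases hσ : evalLit σ l
    · simp [redLab_litVtx_sup_of_evalLit hσ]
    · simp [redLab_litVtx_sup_of_not_evalLit hσ]
  have := Int.add_sub_le_sub_of_modEq hs ht hst (by omega)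
  omega

theorem isFastestD_x_sup {i : ℕ} (hi : i < n) :
    IsFastestD (fromRel (NAERel n φ)) Δ (redLab σ) (Vtx.x i) Vtx.sup 2 := by
  have hfalse : ¬ evalLit σ (i, !σ i) := by simp [evalLit]
  refine ⟨?_, fun d h => h.two_le fun hadj => not_adj_sup_x i hadj.symm⟩
  simpa using hasDurD_of_adj_of_adj (adj_x_litVtx hi (!σ i)) (adj_litVtx_sup hi)
    (by simp) (s := 2) (t := 3) (by norm_num) (by norm_num)
    (by rw [redLab_x_litVtx]) (by rw [redLab_litVtx_sup_of_not_evalLit hfalse])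

theorem isFastestD_sup_x {i : ℕ} (hi : i < n) (hΔ : 2 ≤ Δ) :
    IsFastestD (fromRel (NAERel n φ)) Δ (redLab σ) Vtx.sup (Vtx.x i) Δ := by
  have hfalse : ¬ evalLit σ (i, !σ i) := by simp [evalLit]
  refine ⟨?_, fun d h => by
    have := h.add_sub_two_le_of_sup (not_adj_sup_x i) (fun w hw => redLab_of_adj_x hw) le_rfl
    omega⟩
  convert hasDurD_of_adj_of_adj (adj_litVtx_sup hi).symm (adj_x_litVtx hi (!σ i)).symm
    (by simp) (lab := redLab σ) (Δ := Δ) (s := 3) (t := Δ + 2) (by norm_num) (by omega)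
    (by rw [redLab_comm, redLab_litVtx_sup_of_not_evalLit hfalse])
    (by rw [redLab_comm, redLab_x_litVtx]; exact Int.add_modEq_left) using 1
  ring

theorem isFastestD_cl_sup {j : ℕ} (hj : j < φ.length) {l : Lit}
    (hl : inClause l (φ.getD j default)) (hln : l.1 < n) (hσ : evalLit σ l) :
    IsFastestD (fromRel (NAERel n φ)) Δ (redLab σ) (Vtx.cl j) Vtx.sup 2 := by
  refine ⟨?_, fun d h => h.two_le fun hadj => not_adj_sup_cl j hadj.symm⟩
  simpa using hasDurD_of_adj_of_adj (adj_cl_litVtx hj hl) (adj_litVtx_sup hln)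
    (by simp) (s := 1) (t := 2) le_rfl (by norm_num)
    (by rw [redLab_cl]) (by rw [redLab_litVtx_sup_of_evalLit hσ])

theorem isFastestD_sup_cl {j : ℕ} (hj : j < φ.length) {l : Lit}
    (hl : inClause l (φ.getD j default)) (hln : l.1 < n) (hσ : ¬ evalLit σ l) (hΔ : 3 ≤ Δ) :
    IsFastestD (fromRel (NAERel n φ)) Δ (redLab σ) Vtx.sup (Vtx.cl j) (Δ - 1) := by
  refine ⟨?_, fun d h => by
    have := h.add_sub_two_le_of_sup (not_adj_sup_cl j) (e := 1)
      (fun w _ => by rw [redLab_comm, redLab_cl]) (by norm_num)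
    omega⟩
  convert hasDurD_of_adj_of_adj (adj_litVtx_sup hln).symm (adj_cl_litVtx hj hl).symm
    (by simp) (lab := redLab σ) (Δ := Δ) (s := 3) (t := Δ + 1) (by norm_num) (by omega)
    (by rw [redLab_comm, redLab_litVtx_sup_of_not_evalLit hσ])
    (by rw [redLab_comm, redLab_cl]; exact Int.add_modEq_left) using 1
  ring

end FastestPaths

theorem exists_inClause_of_or {C : Clause} {P : Lit → Prop} (h : P C.1 ∨ P C.2.1 ∨ P C.2.2) :
    ∃ l, inClause l C ∧ P l := by
  rcases h with h | h | h
  exacts [⟨_, .inl rfl, h⟩, ⟨_, .inr (.inl rfl), h⟩, ⟨_, .inr (.inr rfl), h⟩]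

theorem inClause.fst_lt {n : ℕ} {l : Lit} {C : Clause} (hl : inClause l C)
    (h₁ : C.1.1 < n) (h₂ : C.2.1.1 < n) (h₃ : C.2.2.1 < n) : l.1 < n := by
  rcases hl with rfl | rfl | rfl <;> assumption

/-- For a NAE-3-SAT formula `φ` (on variables `0, …, n−1`, each clause having three
distinct variables) satisfied in the NAE sense by `σ`, the constructed Δ-periodic temporal
graph (for any `Δ ≥ 3`) satisfies: for every variable `x_i`, the fastest temporal path from
`x_i` to the super vertex `v` has duration `2` and from `v` to `x_i` duration `Δ`; and for
every clause `c`, the fastest temporal path from `c` to `v` has duration `2` and from `v`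
to `c` duration `Δ − 1`. -/
theorem stmt16 (n : ℕ) (φ : List Clause)
    (hwf : ∀ C ∈ φ, C.1.1 < n ∧ C.2.1.1 < n ∧ C.2.2.1 < n ∧
      C.1.1 ≠ C.2.1.1 ∧ C.1.1 ≠ C.2.2.1 ∧ C.2.1.1 ≠ C.2.2.1)
    (σ : ℕ → Bool)
    (hsat : ∀ C ∈ φ, (evalLit σ C.1 ∨ evalLit σ C.2.1 ∨ evalLit σ C.2.2) ∧
      (¬ evalLit σ C.1 ∨ ¬ evalLit σ C.2.1 ∨ ¬ evalLit σ C.2.2))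
    (Δ : ℕ) (hΔ : 3 ≤ Δ) :
    (∀ i < n,
      IsFastestD (SimpleGraph.fromRel (NAERel n φ)) Δ (redLab σ) (Vtx.x i) Vtx.sup 2 ∧
      IsFastestD (SimpleGraph.fromRel (NAERel n φ)) Δ (redLab σ) Vtx.sup (Vtx.x i) (Δ : ℤ)) ∧
    (∀ j < φ.length,
      IsFastestD (SimpleGraph.fromRel (NAERel n φ)) Δ (redLab σ) (Vtx.cl j) Vtx.sup 2 ∧
      IsFastestD (SimpleGraph.fromRel (NAERel n φ)) Δ (redLab σ) Vtx.sup (Vtx.cl j)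
        ((Δ : ℤ) - 1)) := by
  refine ⟨fun i hi => ⟨isFastestD_x_sup hi, isFastestD_sup_x hi (by omega)⟩, fun j hj => ?_⟩
  have hC : φ.getD j default ∈ φ := by simp [List.getD_eq_getElem?_getD, hj]
  obtain ⟨h₁, h₂, h₃, -⟩ := hwf _ hC
  obtain ⟨lt, hlt, hσt⟩ := exists_inClause_of_or (hsat _ hC).1
  obtain ⟨lf, hlf, hσf⟩ := exists_inClause_of_or (P := fun l => ¬ evalLit σ l) (hsat _ hC).2
  exact ⟨isFastestD_cl_sup hj hlt (hlt.fst_lt h₁ h₂ h₃) hσt,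
    isFastestD_sup_cl hj hlf (hlf.fst_lt h₁ h₂ h₃) hσf hΔ⟩
end

section
/- In the Δ-periodic model, suppose S_{u,v} and S_{w,z} are segments, v_i is an internal vertex of S_{u,v}, and z_j is an internal vertex of S_{w,z} maximizing the fastest-path duration D_{v_i, z_·} over internal vertices of S_{w,z} (the split vertex). If the fastest temporal path from v_i to z_j leaves S_{u,v} through u and enters S_{w,z} through w, then for every internal vertex z_ℓ of S_{w,z} strictly closer to w than z_j, some fastest temporal path from v_i to z_ℓ also leaves through u and enters through w. -/
/-!
Let `W` be a fastest temporal path from `v_i` to `z_(ℓ+1)` entering through `z_ℓ`, and `T` its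
truncation before the last edge. A fastest path `P` from `v_i` to `z_ℓ` cannot visit `z_(ℓ+1)`:
the segment's internal vertices have degree two, so it would run through `z_j`, and its prefix to
`z_j` would be faster than `D(v_i, z_ℓ) ≤ D(v_i, z_j)`. Hence `P` also enters `z_ℓ` from
`z_(ℓ-1)`, over the same edge as `T`, at a time congruent to `T`'s arrival modulo `Δ`; continuing
`P` to `z_(ℓ+1)` with the same final wait shows that `T` is no slower than `P`, so `T` is fastest.
Downward induction from `j` gives the claim.
-/

open SimpleGraph

theorem List.isChain_append_singleton_iff {α : Type*} [Inhabited α] {R : α → α → Prop}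
    {l : List α} {a : α} :
    (l ++ [a]).IsChain R ↔ l.IsChain R ∧ (l ≠ [] → R l.getLast! a) := by
  rw [List.isChain_append]
  rcases l.eq_nil_or_concat' with rfl | ⟨L, b, rfl⟩ <;> simp

theorem duration_append_singleton {l : List ℤ} (hl : l ≠ []) (t : ℤ) :
    duration (l ++ [t]) = duration l + (t - l.getLast!) := by
  have hlast : (l ++ [t]).getLast! = t := List.getLast!_of_getLast? (by simp)
  rw [duration, duration, hlast, List.head!_append _ hl]
  ring

theorem duration_lt_duration_append {l₁ l₂ : List ℤ} (h : (l₁ ++ l₂).IsChain (· < ·))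
    (h₁ : l₁ ≠ []) (h₂ : l₂ ≠ []) : duration l₁ < duration (l₁ ++ l₂) := by
  have hlast₁ : l₁.getLast! = l₁.getLast h₁ :=
    List.getLast!_of_getLast? (List.getLast?_eq_some_getLast h₁)
  have hlast : (l₁ ++ l₂).getLast! = l₂.getLast h₂ :=
    List.getLast!_of_getLast? (by simp [List.getLast?_eq_some_getLast h₂])
  have hlt := (List.pairwise_append.1 (List.isChain_iff_pairwise.1 h)).2.2 _
    (List.getLast_mem h₁) _ (List.getLast_mem h₂)
  simp only [duration, List.head!_append _ h₁, hlast₁, hlast]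
  linarith

theorem SimpleGraph.Walk.IsPath.mem_support_of_neighborSet_subset_pair {V : Type*}
    {G : SimpleGraph V} {u v c a b : V} {p : G.Walk u v} (hp : p.IsPath) (hc : c ∈ p.support)
    (hcu : c ≠ u) (hcv : c ≠ v) (hab : G.neighborSet c ⊆ {a, b}) :
    a ∈ p.support ∧ b ∈ p.support := by
  obtain ⟨n, rfl, hn⟩ := Walk.mem_support_iff_exists_getVert.1 hc
  have h0 : n ≠ 0 := by rintro rfl; exact hcu p.getVert_zero
  have hlt : n < p.length := lt_of_le_of_ne hn (by rintro rfl; exact hcv p.getVert_length)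
  have hprev : p.getVert (n - 1) ∈ ({a, b} : Set V) := hab <| by
    simpa [Nat.sub_add_cancel (Nat.pos_of_ne_zero h0)] using
      (p.adj_getVert_succ (i := n - 1) (by omega)).symm
  have hnext : p.getVert (n + 1) ∈ ({a, b} : Set V) := hab (p.adj_getVert_succ hlt)
  have hne : p.getVert (n - 1) ≠ p.getVert (n + 1) := fun h => by
    have := hp.getVert_injOn (by simp; omega) (by simp; omega) h
    omega
  have hmem₁ := p.getVert_mem_support (n - 1)
  have hmem₂ := p.getVert_mem_support (n + 1)
  rcases hprev with h₁ | h₁ <;> rcases hnext with h₂ | h₂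
  · exact absurd (h₁.trans h₂.symm) hne
  · exact ⟨h₁ ▸ hmem₁, h₂ ▸ hmem₂⟩
  · exact ⟨h₂ ▸ hmem₂, h₁ ▸ hmem₁⟩
  · exact absurd (h₁.trans h₂.symm) hne

theorem SimpleGraph.Walk.exists_eq_concat_of_penultimate_eq {V : Type*} {G : SimpleGraph V}
    {u w y : V} {W : G.Walk u w} (hnil : ¬W.Nil) (hy : W.penultimate = y) :
    ∃ (T : G.Walk u y) (h : G.Adj y w), W = T.concat h := by
  subst hy
  exact ⟨_, _, (Walk.concat_dropLast (W.adj_penultimate hnil)).symm⟩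

theorem SimpleGraph.Walk.getVert_concat_of_le {V : Type*} {G : SimpleGraph V} {u v w : V}
    {p : G.Walk u v} (h : G.Adj v w) {i : ℕ} (hi : i ≤ p.length) :
    (p.concat h).getVert i = p.getVert i := by
  rw [Walk.concat_eq_append, Walk.getVert_append]
  split_ifs with hlt
  · rfl
  · simp [show i = p.length by omega]

section TemporalWalk

variable {V : Type*} {G : SimpleGraph V} {Δ : ℕ} {lab : Sym2 V → ℤ} {u v w : V}

theorem IsTemporalWalk.length_eq {W : G.Walk u v} {times : List ℤ}
    (hW : IsTemporalWalk G Δ lab W times) : times.length = W.length := by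
  rw [← W.length_edges, hW.1.length_eq]

theorem IsTemporalWalk.ne_nil {W : G.Walk u v} {times : List ℤ}
    (hW : IsTemporalWalk G Δ lab W times) (hnil : ¬W.Nil) : times ≠ [] := by
  rw [← List.length_pos_iff, hW.length_eq]
  exact Walk.not_nil_iff_lt_length.1 hnil

theorem isTemporalWalk_concat_iff {p : G.Walk u v} (h : G.Adj v w) {times : List ℤ} {t : ℤ} :
    IsTemporalWalk G Δ lab (p.concat h) (times ++ [t]) ↔
      IsTemporalWalk G Δ lab p times ∧ Active G Δ lab s(v, w) t ∧
        (times ≠ [] → times.getLast! < t) := by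
  simp only [IsTemporalWalk, Walk.edges_concat, List.concat_eq_append]
  constructor
  · rintro ⟨hF, hc⟩
    obtain ⟨hc, hlt⟩ := List.isChain_append_singleton_iff.1 hc
    have hlen : p.edges.length = times.length := by simpa using hF.length_eq
    have hF₁ := List.forall₂_take_append _ _ _ hF
    have hF₂ := List.forall₂_drop_append _ _ _ hF
    rw [List.take_left' hlen] at hF₁
    rw [List.drop_left' hlen, List.forall₂_cons] at hF₂
    exact ⟨⟨hF₁, hc⟩, hF₂.1, hlt⟩
  · rintro ⟨⟨hF, hc⟩, hR, hlt⟩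
    exact ⟨List.rel_append hF (List.Forall₂.cons hR List.Forall₂.nil),
      List.isChain_append_singleton_iff.2 ⟨hc, hlt⟩⟩

theorem IsTemporalWalk.exists_eq_append_singleton {p : G.Walk u v} {h : G.Adj v w}
    {times : List ℤ} (hW : IsTemporalWalk G Δ lab (p.concat h) times) :
    ∃ ts t, times = ts ++ [t] :=
  times.eq_nil_or_concat'.resolve_left <| hW.ne_nil <| by
    simp [Walk.not_nil_iff_lt_length]

theorem IsTemporalWalk.active_getLast {W : G.Walk u v} {times : List ℤ}
    (hW : IsTemporalWalk G Δ lab W times) (hnil : ¬W.Nil) :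
    Active G Δ lab s(W.penultimate, v) times.getLast! := by
  rw [← Walk.concat_dropLast (W.adj_penultimate hnil)] at hW
  obtain ⟨ts, t, rfl⟩ := hW.exists_eq_append_singleton
  simpa using ((isTemporalWalk_concat_iff _).1 hW).2.1

theorem IsTemporalWalk.exists_hasDur_lt {W : G.Walk u v} {times : List ℤ} (hWp : W.IsPath)
    (hW : IsTemporalWalk G Δ lab W times) {c : V} (hc : c ∈ W.support) (hcu : c ≠ u)
    (hcv : c ≠ v) : ∃ d < duration times, HasDur G Δ lab u c d := by
  obtain ⟨n, rfl, hn⟩ := Walk.mem_support_iff_exists_getVert.1 hc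
  have h0 : n ≠ 0 := by rintro rfl; exact hcu W.getVert_zero
  have hlt : n < W.length := lt_of_le_of_ne hn (by rintro rfl; exact hcv W.getVert_length)
  have htake : IsTemporalWalk G Δ lab (W.take n) (times.take n) :=
    ⟨by rw [Walk.edges_take]; exact List.forall₂_take n hW.1, hW.2.take n⟩
  have htake_ne : times.take n ≠ [] :=
    htake.ne_nil (by
      rw [Walk.nil_take_iff, not_or, Walk.not_nil_iff_lt_length]
      exact ⟨by omega, h0⟩)
  have hdrop_ne : times.drop n ≠ [] := by simp [hW.length_eq, hlt]
  refine ⟨duration (times.take n), ?_, W.take n, times.take n, hWp.take n, htake_ne, htake, rfl⟩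
  conv_rhs => rw [← times.take_append_drop n]
  exact duration_lt_duration_append (by rw [times.take_append_drop]; exact hW.2) htake_ne hdrop_ne

/-- `P` arrives at `y` over the same edge as `T`, hence at a time congruent to `T`'s modulo `Δ`,
so it can be continued to `z` at `τ` shifted by the difference of the two arrival times. -/
theorem duration_le_of_concat_isFastest {x y z : V} {T P : G.Walk x y} (h : G.Adj y z)
    {tsT tsP : List ℤ} {τ : ℤ} (hT : IsTemporalWalk G Δ lab (T.concat h) (tsT ++ [τ]))
    (hfast : ∀ d, HasDur G Δ lab x z d → duration (tsT ++ [τ]) ≤ d) (hTnil : ¬T.Nil)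
    (hPp : P.IsPath) (hPt : IsTemporalWalk G Δ lab P tsP) (hPnil : ¬P.Nil)
    (hPz : z ∉ P.support) (hpen : P.penultimate = T.penultimate) :
    duration tsT ≤ duration tsP := by
  obtain ⟨hTt, hτ, hlt⟩ := (isTemporalWalk_concat_iff h).1 hT
  have hTne := hTt.ne_nil hTnil
  have hPne := hPt.ne_nil hPnil
  have hTlast := hTt.active_getLast hTnil
  have hPlast := hPt.active_getLast hPnil
  rw [hpen] at hPlast
  have hτT := hlt hTne
  have hστ : τ + (tsP.getLast! - tsT.getLast!) ≡ τ [ZMOD (Δ : ℤ)] := by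
    have := (Int.ModEq.refl τ).add
      ((hPlast.2.2.trans hTlast.2.2.symm).sub (Int.ModEq.refl tsT.getLast!))
    rwa [sub_self, add_zero] at this
  have hσ : Active G Δ lab s(y, z) (τ + (tsP.getLast! - tsT.getLast!)) :=
    ⟨hτ.1, by linarith [hPlast.2.1], hστ.trans hτ.2.2⟩
  have hPσ : IsTemporalWalk G Δ lab (P.concat h) (tsP ++ [τ + (tsP.getLast! - tsT.getLast!)]) :=
    (isTemporalWalk_concat_iff h).2 ⟨hPt, hσ, fun _ => by linarith⟩
  have hle := hfast _ ⟨P.concat h, _, hPp.concat hPz h, by simp, hPσ, rfl⟩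
  rw [duration_append_singleton hTne, duration_append_singleton hPne] at hle
  linarith

end TemporalWalk

def HasFastestPathVia {V : Type*} (G : SimpleGraph V) (Δ : ℕ) (lab : Sym2 V → ℤ)
    (D : V → V → ℤ) (x y a b : V) : Prop :=
  ∃ (W : G.Walk x y) (times : List ℤ), W.IsPath ∧ IsTemporalWalk G Δ lab W times ∧
    duration times = D x y ∧ W.getVert 1 = a ∧ W.getVert (W.length - 1) = b

section Segment

variable {V : Type*} {G : SimpleGraph V} {Δ : ℕ} {lab : Sym2 V → ℤ} {zz : ℕ → V} {r : ℕ}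

theorem mem_support_of_succ_mem_support
    (hzinj : ∀ s t, s ≤ r → t ≤ r → zz s = zz t → s = t)
    (hzdeg : ∀ t, 1 ≤ t → t ≤ r - 1 → ∀ y, G.Adj (zz t) y → y = zz (t - 1) ∨ y = zz (t + 1))
    {x : V} (hx : ∀ t, 1 ≤ t → t ≤ r - 1 → x ≠ zz t) {m : ℕ} {P : G.Walk x (zz m)}
    (hP : P.IsPath) (hmem : zz (m + 1) ∈ P.support) {k : ℕ} (hmk : m < k) (hkr : k ≤ r) :
    zz k ∈ P.support := by
  induction k, hmk using Nat.le_induction with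
  | base => exact hmem
  | succ k hmk ih =>
    exact (hP.mem_support_of_neighborSet_subset_pair (ih (by omega))
      (hx k (by omega) (by omega)).symm
      (fun h => by have := hzinj k m (by omega) (by omega) h; omega)
      (hzdeg k (by omega) (by omega))).2

theorem penultimate_eq_pred_of_succ_not_mem_support
    (hzdeg : ∀ t, 1 ≤ t → t ≤ r - 1 → ∀ y, G.Adj (zz t) y → y = zz (t - 1) ∨ y = zz (t + 1))
    {x : V} {ℓ : ℕ} (h1 : 1 ≤ ℓ) (hℓ : ℓ ≤ r - 1) {P : G.Walk x (zz ℓ)} (hnil : ¬P.Nil)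
    (hP : zz (ℓ + 1) ∉ P.support) : P.penultimate = zz (ℓ - 1) :=
  (hzdeg ℓ h1 hℓ _ (P.adj_penultimate hnil).symm).resolve_right fun h =>
    hP (h ▸ P.getVert_mem_support _)

theorem succ_not_mem_support_of_duration_le
    (hzinj : ∀ s t, s ≤ r → t ≤ r → zz s = zz t → s = t)
    (hzdeg : ∀ t, 1 ≤ t → t ≤ r - 1 → ∀ y, G.Adj (zz t) y → y = zz (t - 1) ∨ y = zz (t + 1))
    {x : V} (hx : ∀ t, 1 ≤ t → t ≤ r - 1 → x ≠ zz t) {ℓ j : ℕ} (hℓj : ℓ < j) (hj : j ≤ r - 1)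
    {P : G.Walk x (zz ℓ)} {times : List ℤ} (hP : P.IsPath)
    (hPt : IsTemporalWalk G Δ lab P times) {d : ℤ} (hfast : IsFastest G Δ lab x (zz j) d)
    (hle : duration times ≤ d) : zz (ℓ + 1) ∉ P.support := by
  intro hmem
  have hjmem := mem_support_of_succ_mem_support hzinj hzdeg hx hP hmem hℓj (by omega)
  obtain ⟨d', hd', hdur⟩ := hPt.exists_hasDur_lt hP hjmem (hx j (by omega) hj).symm
    (fun h => by have := hzinj j ℓ (by omega) (by omega) h; omega)
  linarith [hfast.2 d' hdur]

theorem HasFastestPathVia.pred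
    (hzinj : ∀ s t, s ≤ r → t ≤ r → zz s = zz t → s = t)
    (hzdeg : ∀ t, 1 ≤ t → t ≤ r - 1 → ∀ y, G.Adj (zz t) y → y = zz (t - 1) ∨ y = zz (t + 1))
    {D : V → V → ℤ} (hreal : ∀ x y : V, x ≠ y → IsFastest G Δ lab x y (D x y))
    {x a : V} (hx : ∀ t, 1 ≤ t → t ≤ r - 1 → x ≠ zz t) {ℓ j : ℕ} (h1 : 1 ≤ ℓ) (hℓj : ℓ < j)
    (hj : j ≤ r - 1) (hsplit : D x (zz ℓ) ≤ D x (zz j))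
    (hW : HasFastestPathVia G Δ lab D x (zz (ℓ + 1)) a (zz ℓ)) :
    HasFastestPathVia G Δ lab D x (zz ℓ) a (zz (ℓ - 1)) := by
  obtain ⟨W, ts, hWp, hWt, hWd, hWa, hWb⟩ := hW
  have hxℓ := hx ℓ h1 (by omega)
  have hxℓ₁ := hx (ℓ + 1) (by omega) (by omega)
  obtain ⟨T, h, rfl⟩ := W.exists_eq_concat_of_penultimate_eq (Walk.not_nil_of_ne hxℓ₁) hWb
  obtain ⟨tsT, τ, rfl⟩ := hWt.exists_eq_append_singleton
  obtain ⟨hTp, hTz⟩ := (Walk.concat_isPath_iff h).1 hWp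
  have hTt := ((isTemporalWalk_concat_iff h).1 hWt).1
  have hTnil : ¬T.Nil := Walk.not_nil_of_ne hxℓ
  obtain ⟨P, tsP, hPp, -, hPt, hPd⟩ := (hreal x (zz ℓ) hxℓ).1
  have hPnil : ¬P.Nil := Walk.not_nil_of_ne hxℓ
  have hPz := succ_not_mem_support_of_duration_le hzinj hzdeg hx hℓj hj hPp hPt
    (hreal x (zz j) (hx j (by omega) hj)) (hPd ▸ hsplit)
  have hTpen := penultimate_eq_pred_of_succ_not_mem_support hzdeg h1 (by omega) hTnil hTz
  have hPpen := penultimate_eq_pred_of_succ_not_mem_support hzdeg h1 (by omega) hPnil hPz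
  have hle := duration_le_of_concat_isFastest h hWt
    (fun d hd => hWd ▸ (hreal x _ hxℓ₁).2 d hd)
    hTnil hPp hPt hPnil hPz (hPpen.trans hTpen.symm)
  refine ⟨T, tsT, hTp, hTt, le_antisymm (hle.trans hPd.le)
    ((hreal x (zz ℓ) hxℓ).2 _ ⟨T, tsT, hTp, hTt.ne_nil hTnil, hTt, rfl⟩), ?_, hTpen⟩
  rwa [Walk.getVert_concat_of_le h (Walk.not_nil_iff_lt_length.1 hTnil)] at hWa

theorem HasFastestPathVia.of_le
    (hzinj : ∀ s t, s ≤ r → t ≤ r → zz s = zz t → s = t)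
    (hzdeg : ∀ t, 1 ≤ t → t ≤ r - 1 → ∀ y, G.Adj (zz t) y → y = zz (t - 1) ∨ y = zz (t + 1))
    {D : V → V → ℤ} (hreal : ∀ x y : V, x ≠ y → IsFastest G Δ lab x y (D x y))
    {x a : V} (hx : ∀ t, 1 ≤ t → t ≤ r - 1 → x ≠ zz t) {j : ℕ} (hj : j ≤ r - 1)
    (hsplit : ∀ t, 1 ≤ t → t ≤ r - 1 → D x (zz t) ≤ D x (zz j))
    (hW : HasFastestPathVia G Δ lab D x (zz j) a (zz (j - 1))) {ℓ : ℕ} (h1 : 1 ≤ ℓ)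
    (hℓj : ℓ ≤ j) : HasFastestPathVia G Δ lab D x (zz ℓ) a (zz (ℓ - 1)) := by
  refine Nat.decreasingInduction'
    (P := fun m => HasFastestPathVia G Δ lab D x (zz m) a (zz (m - 1)))
    (fun k hkj hℓk ih => ?_) hℓj hW
  exact HasFastestPathVia.pred hzinj hzdeg hreal hx (by omega) hkj hj
    (hsplit k (by omega) (by omega)) (by rwa [Nat.add_sub_cancel] at ih)

end Segment

theorem stmt17_general {V : Type*} (G : SimpleGraph V) (Δ : ℕ)
    (lab : Sym2 V → ℤ) (D : V → V → ℤ)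
    (hreal : ∀ x y : V, x ≠ y → IsFastest G Δ lab x y (D x y))
    (p r iIdx jIdx : ℕ) (vv zz : ℕ → V)
    (hzinj : ∀ s t, s ≤ r → t ≤ r → zz s = zz t → s = t)
    (hdisj : ∀ s t, 1 ≤ s → s ≤ p - 1 → 1 ≤ t → t ≤ r - 1 → vv s ≠ zz t)
    (hzdeg : ∀ t, 1 ≤ t → t ≤ r - 1 → ∀ y, G.Adj (zz t) y → y = zz (t - 1) ∨ y = zz (t + 1))
    (hi1 : 1 ≤ iIdx) (hi2 : iIdx ≤ p - 1) (hj2 : jIdx ≤ r - 1)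
    (hsplit : ∀ t, 1 ≤ t → t ≤ r - 1 → D (vv iIdx) (zz t) ≤ D (vv iIdx) (zz jIdx))
    (hfastpath : ∃ (W : G.Walk (vv iIdx) (zz jIdx)) (times : List ℤ),
      W.IsPath ∧ IsTemporalWalk G Δ lab W times ∧
      duration times = D (vv iIdx) (zz jIdx) ∧
      W.getVert 1 = vv (iIdx - 1) ∧ W.getVert (W.length - 1) = zz (jIdx - 1)) :
    ∀ ℓ, 1 ≤ ℓ → ℓ < jIdx →
      ∃ (W : G.Walk (vv iIdx) (zz ℓ)) (times : List ℤ),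
        W.IsPath ∧ IsTemporalWalk G Δ lab W times ∧
        duration times = D (vv iIdx) (zz ℓ) ∧
        W.getVert 1 = vv (iIdx - 1) ∧ W.getVert (W.length - 1) = zz (ℓ - 1) := fun _ hℓ hℓj =>
  HasFastestPathVia.of_le hzinj hzdeg hreal (hdisj iIdx · hi1 hi2) hj2 hsplit hfastpath hℓ hℓj.le

/-- Split vertex lemma: let `S_{u,v} = (vv 0, …, vv p)` and `S_{w,z} = (zz 0, …, zz r)` be
segments (internal vertices have degree 2), `v_i = vv iIdx` internal in `S_{u,v}`, and
`z_j = zz jIdx` an internal vertex of `S_{w,z}` maximizing the fastest-path duration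
`D v_i ·` over internal vertices of `S_{w,z}`. If a fastest temporal path from `v_i` to
`z_j` leaves `S_{u,v}` through `u` (its second vertex is `vv (iIdx−1)`) and enters
`S_{w,z}` through `w` (its second-to-last vertex is `zz (jIdx−1)`), then for every
internal vertex `zz ℓ` strictly closer to `w` than `z_j`, some fastest temporal path from
`v_i` to `zz ℓ` also leaves through `u` and enters through `w`. -/
theorem stmt17 {V : Type*} (G : SimpleGraph V) (Δ : ℕ) (hΔ : 1 ≤ Δ)
    (lab : Sym2 V → ℤ) (hval : ValidLab G Δ lab) (D : V → V → ℤ)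
    (hreal : ∀ x y : V, x ≠ y → IsFastest G Δ lab x y (D x y))
    (p r iIdx jIdx : ℕ) (vv zz : ℕ → V) (hp : 2 ≤ p) (hr : 2 ≤ r)
    (hvadj : ∀ t, t + 1 ≤ p → G.Adj (vv t) (vv (t + 1)))
    (hzadj : ∀ t, t + 1 ≤ r → G.Adj (zz t) (zz (t + 1)))
    (hvinj : ∀ s t, s ≤ p → t ≤ p → vv s = vv t → s = t)
    (hzinj : ∀ s t, s ≤ r → t ≤ r → zz s = zz t → s = t)
    (hdisj : ∀ s t, 1 ≤ s → s ≤ p - 1 → 1 ≤ t → t ≤ r - 1 → vv s ≠ zz t)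
    (hvdeg : ∀ t, 1 ≤ t → t ≤ p - 1 → ∀ y, G.Adj (vv t) y → y = vv (t - 1) ∨ y = vv (t + 1))
    (hzdeg : ∀ t, 1 ≤ t → t ≤ r - 1 → ∀ y, G.Adj (zz t) y → y = zz (t - 1) ∨ y = zz (t + 1))
    (hi1 : 1 ≤ iIdx) (hi2 : iIdx ≤ p - 1) (hj1 : 1 ≤ jIdx) (hj2 : jIdx ≤ r - 1)
    (hsplit : ∀ t, 1 ≤ t → t ≤ r - 1 → D (vv iIdx) (zz t) ≤ D (vv iIdx) (zz jIdx))
    (hfastpath : ∃ (W : G.Walk (vv iIdx) (zz jIdx)) (times : List ℤ),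
      W.IsPath ∧ IsTemporalWalk G Δ lab W times ∧
      duration times = D (vv iIdx) (zz jIdx) ∧
      W.getVert 1 = vv (iIdx - 1) ∧ W.getVert (W.length - 1) = zz (jIdx - 1)) :
    ∀ ℓ, 1 ≤ ℓ → ℓ < jIdx →
      ∃ (W : G.Walk (vv iIdx) (zz ℓ)) (times : List ℤ),
        W.IsPath ∧ IsTemporalWalk G Δ lab W times ∧
        duration times = D (vv iIdx) (zz ℓ) ∧
        W.getVert 1 = vv (iIdx - 1) ∧ W.getVert (W.length - 1) = zz (ℓ - 1) :=
  stmt17_general G Δ lab D hreal p r iIdx jIdx vv zz hzinj hdisj hzdeg hi1 hi2 hj2 hsplit hfastpath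
end
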